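/- arXiv:2011.07745 — 11 statements merged into one kernel-verified Lean document; each statement's English description precedes it below -/
import Mathlib

section
/- Let C ⊆ E be a closed convex set and let F ⊴ C be a face. The following are equivalent: (i) F is an amenable face of C, i.e., for every bounded set B ⊆ E there exists κ > 0 such that dist(x, F) ≤ κ·dist(x, C) for all x ∈ aff(F) ∩ B; (ii) C and aff(F) are boundedly linearly regular, i.e., for every bounded set B ⊆ E there exists κ_B > 0 such that dist(x, F) ≤ κ_B · max{dist(x, aff(F)), dist(x, C)} for all x ∈ B; (iii) C and aff(F) are subtransversal at every point of F, i.e., for every x* ∈ F there exist a neighbourhood U of x* and κ > 0 such that dist(x, F) ≤ κ·(dist(x, C) + dist(x, aff(F))) for all x ∈ U. -/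
open Metric Bornology Filter Topology

/-!
(i) is (ii) restricted to `aff F`, and (ii) follows from (i) by passing through a nearest point
of `aff F`. Since `F = C ∩ aff F`, (iii) is a local error bound at every point of `C ∩ aff F`;
away from `C ∩ aff F` the right-hand side of (ii) is positive, so a local bound holds trivially,
and compactness of bounded sets turns local bounds into (ii).
-/

/-- `F` is a face of the convex set `C`. -/
def IsFace {E : Type*} [NormedAddCommGroup E] [NormedSpace ℝ E] (C F : Set E) : Prop :=
  IsClosed F ∧ Convex ℝ F ∧ F ⊆ C ∧
    ∀ x ∈ C, ∀ y ∈ C, ∀ α : ℝ, 0 < α → α < 1 → α • x + (1 - α) • y ∈ F → x ∈ F ∧ y ∈ F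

theorem mem_nhdsWithin_affineSpan_of_mem_intrinsicInterior {E : Type*} [NormedAddCommGroup E]
    [NormedSpace ℝ E] {s : Set E} {z : E} (hz : z ∈ intrinsicInterior ℝ s) :
    s ∈ 𝓝[affineSpan ℝ s] z := by
  obtain ⟨y, hy, rfl⟩ := mem_intrinsicInterior.1 hz
  exact mem_of_superset (mem_nhds_subtype_iff_nhdsWithin.1 (mem_interior_iff_mem_nhds.1 hy))
    (Set.image_preimage_subset _ _)

/-- Extending the segment from `x` slightly beyond a relative interior point `z` of `F` stays in
`F`, so `z` lies in an open segment of `C` with endpoint `x`. -/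
theorem IsFace.inter_affineSpan_subset {E : Type*} [NormedAddCommGroup E] [NormedSpace ℝ E]
    [FiniteDimensional ℝ E] {C F : Set E} (hF : IsFace C F) :
    C ∩ (affineSpan ℝ F : Set E) ⊆ F := by
  obtain ⟨-, hFcv, hFC, hface⟩ := hF
  rintro x ⟨hxC, hxA⟩
  obtain ⟨z, hz⟩ : (intrinsicInterior ℝ F).Nonempty :=
    Set.Nonempty.intrinsicInterior hFcv ((affineSpan_nonempty ℝ).1 ⟨x, hxA⟩)
  have hzF : z ∈ F := intrinsicInterior_subset hz
  have hline : Tendsto (AffineMap.lineMap x z) (𝓝 (1 : ℝ)) (𝓝[affineSpan ℝ F] z) :=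
    tendsto_nhdsWithin_iff.2 ⟨AffineMap.lineMap_continuous.tendsto' _ _ (by simp),
      .of_forall fun _ => AffineMap.lineMap_mem _ hxA (subset_affineSpan ℝ F hzF)⟩
  obtain ⟨t, ht1, hwF⟩ :=
    (hline.eventually_mem (mem_nhdsWithin_affineSpan_of_mem_intrinsicInterior hz)).exists_gt
  have hz_seg : z ∈ openSegment ℝ x (AffineMap.lineMap x z t) := by
    nth_rw 1 [← AffineMap.lineMap_apply_zero (k := ℝ) x z, ← image_openSegment]
    exact ⟨1, Ioo_subset_openSegment ⟨zero_lt_one, ht1⟩, by simp⟩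
  obtain ⟨a, b, ha, hb, hab, hcomb⟩ := hz_seg
  obtain rfl : b = 1 - a := by linarith
  exact (hface x hxC _ (hFC hwF) a ha (by linarith) (by rwa [hcomb])).1

theorem ContinuousAt.exists_eventually_le_mul {X : Type*} [TopologicalSpace X] {f g : X → ℝ}
    {x : X} (hf : ContinuousAt f x) (hg : ContinuousAt g x) (hgx : 0 < g x) :
    ∃ κ, ∀ᶠ y in 𝓝 x, f y ≤ κ * g y := by
  refine ⟨f x / g x + 1, ?_⟩
  filter_upwards [(hf.div hg hgx.ne').eventually (gt_mem_nhds (lt_add_one _)),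
    hg.eventually (lt_mem_nhds hgx)] with y hratio hgy
  exact ((div_lt_iff₀ hgy).1 hratio).le

theorem IsCompact.exists_pos_forall_le_mul {X : Type*} [TopologicalSpace X] {K : Set X}
    {f g : X → ℝ} (hK : IsCompact K) (hg : ∀ x, 0 ≤ g x)
    (hloc : ∀ x ∈ K, ∃ κ, ∀ᶠ y in 𝓝 x, f y ≤ κ * g y) :
    ∃ κ > 0, ∀ x ∈ K, f x ≤ κ * g x := by
  have hmono {κ κ' : ℝ} (h : κ ≤ κ') (x : X) : κ * g x ≤ κ' * g x :=
    mul_le_mul_of_nonneg_right h (hg x)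
  refine hK.induction_on (p := fun s => ∃ κ > 0, ∀ x ∈ s, f x ≤ κ * g x)
    ⟨1, one_pos, by simp⟩ ?_ ?_ ?_
  · rintro s t hst ⟨κ, hκ, h⟩
    exact ⟨κ, hκ, fun x hx => h x (hst hx)⟩
  · rintro s t ⟨κ₁, hκ₁, h₁⟩ ⟨κ₂, hκ₂, h₂⟩
    refine ⟨max κ₁ κ₂, lt_max_of_lt_left hκ₁, ?_⟩
    rintro x (hx | hx)
    · exact (h₁ x hx).trans (hmono (le_max_left _ _) x)
    · exact (h₂ x hx).trans (hmono (le_max_right _ _) x)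
  · intro x hx
    obtain ⟨κ, hκ⟩ := hloc x hx
    exact ⟨_, mem_nhdsWithin_of_mem_nhds hκ, max κ 1, lt_max_of_lt_right one_pos,
      fun y hy => hy.trans (hmono (le_max_left _ _) y)⟩

section ErrorBounds

variable {X : Type*} [MetricSpace X] [ProperSpace X] {S A F B : Set X}

theorem exists_infDist_le_mul_max_of_forall_mem_inter (hA : IsClosed A) (hAne : A.Nonempty)
    (h : ∀ B : Set X, IsBounded B → ∃ κ > (0:ℝ), ∀ x ∈ A ∩ B, infDist x F ≤ κ * infDist x S)
    (hB : IsBounded B) :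
    ∃ κ > (0:ℝ), ∀ x ∈ B, infDist x F ≤ κ * max (infDist x A) (infDist x S) := by
  obtain ⟨a, ha⟩ := hAne
  obtain ⟨R, hR⟩ := hB.subset_closedBall a
  obtain ⟨κ, hκ, hbound⟩ := h (closedBall a (2 * R)) isBounded_closedBall
  refine ⟨2 * κ + 1, by positivity, fun x hx => ?_⟩
  obtain ⟨p, hpA, hp⟩ := hA.exists_infDist_eq_dist ⟨a, ha⟩ x
  have hxp : dist x p ≤ R := (hp ▸ infDist_le_dist_of_mem ha).trans (hR hx)
  have hpB : p ∈ closedBall a (2 * R) := by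
    rw [mem_closedBall]
    linarith [dist_triangle_left p a x, mem_closedBall.1 (hR hx)]
  set m := max (infDist x A) (infDist x S)
  calc infDist x F ≤ infDist p F + dist x p := infDist_le_infDist_add_dist
    _ ≤ κ * infDist p S + dist x p := by gcongr; exact hbound p ⟨hpA, hpB⟩
    _ ≤ κ * (infDist x S + dist x p) + dist x p := by
        gcongr; exact dist_comm p x ▸ infDist_le_infDist_add_dist
    _ = κ * infDist x S + (κ + 1) * infDist x A := by rw [hp]; ring
    _ ≤ κ * m + (κ + 1) * m := by gcongr <;> simp [m]
    _ = (2 * κ + 1) * m := by ring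

theorem exists_infDist_le_mul_max_of_forall_nhds (hS : IsClosed S) (hSne : S.Nonempty)
    (hA : IsClosed A) (hAne : A.Nonempty) (hSA : S ∩ A ⊆ F)
    (hloc : ∀ x ∈ F, ∃ U ∈ 𝓝 x, ∃ κ > (0:ℝ),
      ∀ y ∈ U, infDist y F ≤ κ * (infDist y S + infDist y A))
    (hB : IsBounded B) :
    ∃ κ > (0:ℝ), ∀ x ∈ B, infDist x F ≤ κ * max (infDist x A) (infDist x S) := by
  have hlocal (x : X) :
      ∃ κ, ∀ᶠ y in 𝓝 x, infDist y F ≤ κ * max (infDist y A) (infDist y S) := by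
    by_cases hx : x ∈ S ∩ A
    · obtain ⟨U, hU, κ, hκ, hbound⟩ := hloc x (hSA hx)
      refine ⟨2 * κ, eventually_of_mem hU fun y hy => (hbound y hy).trans ?_⟩
      calc κ * (infDist y S + infDist y A) ≤ κ * (2 * max (infDist y A) (infDist y S)) := by
            gcongr
            linarith [le_max_left (infDist y A) (infDist y S),
              le_max_right (infDist y A) (infDist y S)]
        _ = 2 * κ * max (infDist y A) (infDist y S) := by ring
    · have hpos : 0 < max (infDist x A) (infDist x S) := by
        rcases not_and_or.1 hx with hxS | hxA
        · exact lt_max_of_lt_right ((hS.notMem_iff_infDist_pos hSne).1 hxS)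
        · exact lt_max_of_lt_left ((hA.notMem_iff_infDist_pos hAne).1 hxA)
      exact (continuous_infDist_pt F).continuousAt.exists_eventually_le_mul
        ((continuous_infDist_pt A).max (continuous_infDist_pt S)).continuousAt hpos
  obtain ⟨κ, hκ, hbound⟩ := hB.isCompact_closure.exists_pos_forall_le_mul
    (fun _ => le_max_of_le_left infDist_nonneg) (fun x _ => hlocal x)
  exact ⟨κ, hκ, fun x hx => hbound x (subset_closure hx)⟩

end ErrorBounds

theorem amenable_face_equivalences_general {E : Type*} [NormedAddCommGroup E] [InnerProductSpace ℝ E]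
    [FiniteDimensional ℝ E] (C F : Set E)
    (hCcl : IsClosed C) (hF : IsFace C F) :
    -- (i) F is an amenable face of C
    ((∀ B : Set E, IsBounded B → ∃ κ > (0:ℝ),
        ∀ x ∈ (affineSpan ℝ F : Set E) ∩ B, infDist x F ≤ κ * infDist x C) ↔
    -- (ii) C and aff F are boundedly linearly regular
      (∀ B : Set E, IsBounded B → ∃ κ > (0:ℝ),
        ∀ x ∈ B, infDist x F ≤ κ * max (infDist x (affineSpan ℝ F : Set E)) (infDist x C)))
    ∧
    -- (ii) ↔ (iii) C and aff F are subtransversal at every point of F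
    ((∀ B : Set E, IsBounded B → ∃ κ > (0:ℝ),
        ∀ x ∈ B, infDist x F ≤ κ * max (infDist x (affineSpan ℝ F : Set E)) (infDist x C)) ↔
      (∀ xs ∈ F, ∃ U ∈ nhds xs, ∃ κ > (0:ℝ),
        ∀ x ∈ U, infDist x F ≤ κ * (infDist x C + infDist x (affineSpan ℝ F : Set E)))) := by
  rcases F.eq_empty_or_nonempty with rfl | hFne
  · have hC : ∀ B : Set E, ∃ κ, 0 < κ ∧ ∀ x ∈ B, 0 ≤ κ * max 0 (infDist x C) :=
      fun _ => ⟨1, one_pos, fun _ _ => by positivity⟩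
    simp [hC, exists_gt]
  have hA : IsClosed (affineSpan ℝ F : Set E) := (affineSpan ℝ F).closed_of_finiteDimensional
  have hAne : (affineSpan ℝ F : Set E).Nonempty := (affineSpan_nonempty ℝ).2 hFne
  have hCne : C.Nonempty := hFne.mono hF.2.2.1
  refine ⟨⟨fun hi B hB => exists_infDist_le_mul_max_of_forall_mem_inter hA hAne hi hB,
    fun hii B hB => ?_⟩, fun hii xs _ => ?_, fun hiii B hB =>
    exists_infDist_le_mul_max_of_forall_nhds hCcl hCne hA hAne hF.inter_affineSpan_subset
      hiii hB⟩
  · obtain ⟨κ, hκ, hbound⟩ := hii B hB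
    refine ⟨κ, hκ, fun x hx => ?_⟩
    simpa [infDist_zero_of_mem hx.1, infDist_nonneg] using hbound x hx.2
  · obtain ⟨κ, hκ, hbound⟩ := hii (ball xs 1) isBounded_ball
    refine ⟨ball xs 1, ball_mem_nhds xs one_pos, κ, hκ, fun x hx => (hbound x hx).trans ?_⟩
    gcongr
    exact max_le (le_add_of_nonneg_left infDist_nonneg) (le_add_of_nonneg_right infDist_nonneg)

/-- Proposition 3.2: equivalence between amenability of a face, bounded linear
regularity of `C` and `aff F`, and subtransversality of `C` and `aff F` at every
point of `F`. -/
theorem amenable_face_equivalences {E : Type*} [NormedAddCommGroup E] [InnerProductSpace ℝ E]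
    [FiniteDimensional ℝ E] (C F : Set E)
    (hCcl : IsClosed C) (hCcv : Convex ℝ C) (hF : IsFace C F) :
    -- (i) F is an amenable face of C
    ((∀ B : Set E, IsBounded B → ∃ κ > (0:ℝ),
        ∀ x ∈ (affineSpan ℝ F : Set E) ∩ B, infDist x F ≤ κ * infDist x C) ↔
    -- (ii) C and aff F are boundedly linearly regular
      (∀ B : Set E, IsBounded B → ∃ κ > (0:ℝ),
        ∀ x ∈ B, infDist x F ≤ κ * max (infDist x (affineSpan ℝ F : Set E)) (infDist x C)))
    ∧
    -- (ii) ↔ (iii) C and aff F are subtransversal at every point of F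
    ((∀ B : Set E, IsBounded B → ∃ κ > (0:ℝ),
        ∀ x ∈ B, infDist x F ≤ κ * max (infDist x (affineSpan ℝ F : Set E)) (infDist x C)) ↔
      (∀ xs ∈ F, ∃ U ∈ nhds xs, ∃ κ > (0:ℝ),
        ∀ x ∈ U, infDist x F ≤ κ * (infDist x C + infDist x (affineSpan ℝ F : Set E)))) :=
  amenable_face_equivalences_general C F hCcl hF
end

section
/- If C1 ⊆ E1 and C2 ⊆ E2 are amenable closed convex sets, then the product C1 × C2 ⊆ E1 × E2 is an amenable closed convex set (with respect to any product norm on E1 × E2, e.g. ‖(x,y)‖ = max{‖x‖, ‖y‖}). -/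
open Metric Bornology

/-- `F` is an amenable face of `C`. -/
def IsAmenableFace {E : Type*} [NormedAddCommGroup E] [NormedSpace ℝ E] (C F : Set E) : Prop :=
  ∀ B : Set E, IsBounded B → ∃ κ > (0:ℝ),
    ∀ x ∈ (affineSpan ℝ F : Set E) ∩ B, infDist x F ≤ κ * infDist x C

/-- `C` is an amenable convex set: every face of `C` is an amenable face. -/
def AmenableSet {E : Type*} [NormedAddCommGroup E] [NormedSpace ℝ E] (C : Set E) : Prop :=
  ∀ F : Set E, IsFace C F → IsAmenableFace C F

/-- Proposition 3.4(ii): the product of two amenable closed convex sets is amenable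
(the product space `E1 × E2` carries the sup product norm). -/
theorem amenable_prod {E1 E2 : Type*}
    [NormedAddCommGroup E1] [InnerProductSpace ℝ E1] [FiniteDimensional ℝ E1]
    [NormedAddCommGroup E2] [InnerProductSpace ℝ E2] [FiniteDimensional ℝ E2]
    (C1 : Set E1) (C2 : Set E2)
    (hC1cl : IsClosed C1) (hC1cv : Convex ℝ C1)
    (hC2cl : IsClosed C2) (hC2cv : Convex ℝ C2)
    (hA1 : AmenableSet C1) (hA2 : AmenableSet C2) :
    AmenableSet (C1 ×ˢ C2) := by
  rintro F ⟨hFcl, hFcv, hFsub, hface⟩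
  by_cases hne : F.Nonempty
  · obtain ⟨⟨a, b⟩, hab⟩ := hne
    set F1 : Set E1 := Prod.fst '' F with hF1def
    set F2 : Set E2 := Prod.snd '' F with hF2def
    have hb2 : b ∈ F2 := ⟨(a, b), hab, rfl⟩
    have ha1 : a ∈ F1 := ⟨(a, b), hab, rfl⟩
    -- F is a product of its projections
    have hEq : F = F1 ×ˢ F2 := by
      apply Set.Subset.antisymm
      · intro p hp
        exact ⟨⟨p, hp, rfl⟩, ⟨p, hp, rfl⟩⟩
      · rintro ⟨x1, y2⟩ ⟨⟨p, hp, hp1⟩, ⟨q, hq, hq2⟩⟩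
        obtain ⟨px, py⟩ := p
        obtain ⟨qx, qy⟩ := q
        simp only [Prod.mk.injEq] at hp1 hq2
        subst hp1; subst hq2
        have hx1C : px ∈ C1 := (hFsub hp).1
        have hy2C : qy ∈ C2 := (hFsub hq).2
        have hy1C : qx ∈ C1 := (hFsub hq).1
        have hx2C : py ∈ C2 := (hFsub hp).2
        have hmid : (1/2 : ℝ) • ((px, qy) : E1 × E2) + (1 - 1/2 : ℝ) • ((qx, py) : E1 × E2)
            ∈ F := by
          have heq2 : (1/2 : ℝ) • ((px, qy) : E1 × E2) + (1 - 1/2 : ℝ) • ((qx, py) : E1 × E2)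
              = (1/2 : ℝ) • ((px, py) : E1 × E2) + (1/2 : ℝ) • ((qx, qy) : E1 × E2) := by
            apply Prod.ext <;> simp [Prod.smul_def] <;> module
          rw [heq2]
          exact hFcv hp hq (by norm_num) (by norm_num) (by norm_num)
        exact (hface (px, qy) ⟨hx1C, hy2C⟩ (qx, py) ⟨hy1C, hx2C⟩ (1/2)
          (by norm_num) (by norm_num) hmid).1
    have hCne : (C1 ×ˢ C2).Nonempty := ⟨(a, b), hFsub hab⟩
    -- F1 is a face of C1
    have hF1 : IsFace C1 F1 := by
      refine ⟨?_, hFcv.linear_image (LinearMap.fst ℝ E1 E2), ?_, ?_⟩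
      · have : F1 = (fun x : E1 => (x, b)) ⁻¹' F := by
          ext x
          constructor
          · intro hx
            rw [hEq]; exact ⟨hx, hb2⟩
          · intro hx
            exact ⟨(x, b), hx, rfl⟩
        rw [this]
        exact hFcl.preimage (continuous_id.prodMk continuous_const)
      · rintro _ ⟨p, hp, rfl⟩; exact (hFsub hp).1
      · rintro x hx y hy α hα0 hα1 ⟨p, hp, hp1⟩
        have hz : p.2 ∈ C2 := (hFsub hp).2
        have hmem : α • ((x, p.2) : E1 × E2) + (1 - α) • ((y, p.2) : E1 × E2) ∈ F := by
          have : α • ((x, p.2) : E1 × E2) + (1 - α) • ((y, p.2) : E1 × E2) = p := by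
            apply Prod.ext
            · simpa [Prod.smul_def] using hp1.symm
            · simp only [Prod.smul_def, Prod.snd_add]; module
          rw [this]; exact hp
        obtain ⟨h1, h2⟩ := hface (x, p.2) ⟨hx, hz⟩ (y, p.2) ⟨hy, hz⟩ α hα0 hα1 hmem
        exact ⟨⟨_, h1, rfl⟩, ⟨_, h2, rfl⟩⟩
    -- F2 is a face of C2
    have hF2 : IsFace C2 F2 := by
      refine ⟨?_, hFcv.linear_image (LinearMap.snd ℝ E1 E2), ?_, ?_⟩
      · have : F2 = (fun y : E2 => (a, y)) ⁻¹' F := by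
          ext y
          constructor
          · intro hy
            rw [hEq]; exact ⟨ha1, hy⟩
          · intro hy
            exact ⟨(a, y), hy, rfl⟩
        rw [this]
        exact hFcl.preimage (continuous_const.prodMk continuous_id)
      · rintro _ ⟨p, hp, rfl⟩; exact (hFsub hp).2
      · rintro x hx y hy α hα0 hα1 ⟨p, hp, hp2⟩
        have hz : p.1 ∈ C1 := (hFsub hp).1
        have hmem : α • ((p.1, x) : E1 × E2) + (1 - α) • ((p.1, y) : E1 × E2) ∈ F := by
          have : α • ((p.1, x) : E1 × E2) + (1 - α) • ((p.1, y) : E1 × E2) = p := by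
            apply Prod.ext
            · simp only [Prod.smul_def, Prod.fst_add]; module
            · simpa [Prod.smul_def] using hp2.symm
          rw [this]; exact hp
        obtain ⟨h1, h2⟩ := hface (p.1, x) ⟨hz, hx⟩ (p.1, y) ⟨hz, hy⟩ α hα0 hα1 hmem
        exact ⟨⟨_, h1, rfl⟩, ⟨_, h2, rfl⟩⟩
    intro B hB
    obtain ⟨κ1, hκ1, h1⟩ := hA1 F1 hF1 (Prod.fst '' B)
      ((LipschitzWith.prod_fst).isBounded_image hB)
    obtain ⟨κ2, hκ2, h2⟩ := hA2 F2 hF2 (Prod.snd '' B)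
      ((LipschitzWith.prod_snd).isBounded_image hB)
    refine ⟨max κ1 κ2, lt_max_of_lt_left hκ1, ?_⟩
    rintro x ⟨hxs, hxB⟩
    -- project membership in the affine span
    have hx1span : x.1 ∈ (affineSpan ℝ F1 : Set E1) := by
      have : x.1 ∈ (affineSpan ℝ F).map (AffineMap.fst : E1 × E2 →ᵃ[ℝ] E1) :=
        AffineSubspace.mem_map.2 ⟨x, hxs, rfl⟩
      rwa [AffineSubspace.map_span, AffineMap.coe_fst] at this
    have hx2span : x.2 ∈ (affineSpan ℝ F2 : Set E2) := by
      have : x.2 ∈ (affineSpan ℝ F).map (AffineMap.snd : E1 × E2 →ᵃ[ℝ] E2) :=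
        AffineSubspace.mem_map.2 ⟨x, hxs, rfl⟩
      rwa [AffineSubspace.map_span, AffineMap.coe_snd] at this
    have hd1 : infDist x.1 F1 ≤ κ1 * infDist x.1 C1 :=
      h1 x.1 ⟨hx1span, ⟨x, hxB, rfl⟩⟩
    have hd2 : infDist x.2 F2 ≤ κ2 * infDist x.2 C2 :=
      h2 x.2 ⟨hx2span, ⟨x, hxB, rfl⟩⟩
    -- inf dist to C dominates the componentwise ones
    obtain ⟨c, hcC, hcd⟩ := (hC1cl.prod hC2cl).exists_infDist_eq_dist hCne x
    have hC1le : infDist x.1 C1 ≤ infDist x (C1 ×ˢ C2) := by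
      calc infDist x.1 C1 ≤ dist x.1 c.1 := infDist_le_dist_of_mem hcC.1
        _ ≤ dist x c := by rw [Prod.dist_eq]; exact le_max_left _ _
        _ = infDist x (C1 ×ˢ C2) := hcd.symm
    have hC2le : infDist x.2 C2 ≤ infDist x (C1 ×ˢ C2) := by
      calc infDist x.2 C2 ≤ dist x.2 c.2 := infDist_le_dist_of_mem hcC.2
        _ ≤ dist x c := by rw [Prod.dist_eq]; exact le_max_right _ _
        _ = infDist x (C1 ×ˢ C2) := hcd.symm
    -- inf dist to F is at most the max of componentwise ones
    obtain ⟨y1, hy1, hy1d⟩ := hF1.1.exists_infDist_eq_dist ⟨a, ha1⟩ x.1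
    obtain ⟨y2, hy2, hy2d⟩ := hF2.1.exists_infDist_eq_dist ⟨b, hb2⟩ x.2
    have hFle : infDist x F ≤ max (infDist x.1 F1) (infDist x.2 F2) := by
      have hmem : ((y1, y2) : E1 × E2) ∈ F := by rw [hEq]; exact ⟨hy1, hy2⟩
      calc infDist x F ≤ dist x (y1, y2) := infDist_le_dist_of_mem hmem
        _ = max (dist x.1 y1) (dist x.2 y2) := Prod.dist_eq
        _ = max (infDist x.1 F1) (infDist x.2 F2) := by rw [hy1d, hy2d]
    have hCd : (0:ℝ) ≤ infDist x (C1 ×ˢ C2) := infDist_nonneg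
    calc infDist x F ≤ max (infDist x.1 F1) (infDist x.2 F2) := hFle
      _ ≤ max (κ1 * infDist x.1 C1) (κ2 * infDist x.2 C2) := max_le_max hd1 hd2
      _ ≤ max κ1 κ2 * infDist x (C1 ×ˢ C2) := by
          apply max_le
          · exact mul_le_mul (le_max_left _ _) hC1le infDist_nonneg
              (le_of_lt (lt_max_of_lt_left hκ1))
          · exact mul_le_mul (le_max_right _ _) hC2le infDist_nonneg
              (le_of_lt (lt_max_of_lt_left hκ1))
  · rw [Set.not_nonempty_iff_eq_empty] at hne
    subst hne
    intro B hB
    refine ⟨1, one_pos, ?_⟩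
    rintro x ⟨hx, -⟩
    simp at hx
end

section
/- Let A : E → Ê be an injective affine map between finite-dimensional real inner product spaces and let C ⊆ E be a closed convex set. Then A(C) is an amenable closed convex set if and only if C is an amenable closed convex set. -/
open Metric Bornology NNReal

section helpers

variable {E E' : Type*} [NormedAddCommGroup E] [NormedSpace ℝ E]
  [NormedAddCommGroup E'] [NormedSpace ℝ E']

lemma infDist_image_le_lip [ProperSpace E] {f : E → E'} {L : ℝ≥0} (hf : LipschitzWith L f)
    {S : Set E} (hS : S.Nonempty) (hScl : IsClosed S) (x : E) :
    infDist (f x) (f '' S) ≤ L * infDist x S := by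
  obtain ⟨y, hyS, hy⟩ := hScl.exists_infDist_eq_dist hS x
  calc infDist (f x) (f '' S) ≤ dist (f x) (f y) :=
        infDist_le_dist_of_mem ⟨y, hyS, rfl⟩
    _ ≤ L * dist x y := hf.dist_le_mul x y
    _ = L * infDist x S := by rw [hy]

lemma le_infDist_image_anti [ProperSpace E'] {f : E → E'} {K : ℝ≥0} (hf : AntilipschitzWith K f)
    {S : Set E} (hS : S.Nonempty) (hScl : IsClosed (f '' S)) (x : E) :
    infDist x S ≤ K * infDist (f x) (f '' S) := by
  obtain ⟨z, hzS, hz⟩ := hScl.exists_infDist_eq_dist (hS.image f) (f x)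
  obtain ⟨y, hyS, rfl⟩ := hzS
  calc infDist x S ≤ dist x y := infDist_le_dist_of_mem hyS
    _ ≤ K * dist (f x) (f y) := hf.le_mul_dist x y
    _ = K * infDist (f x) (f '' S) := by rw [hz]

lemma isFace_image {A : E →ᵃ[ℝ] E'} (hA : Function.Injective A) (hAcm : IsClosedMap A)
    {C F : Set E} (hF : IsFace C F) : IsFace (A '' C) (A '' F) := by
  obtain ⟨hFcl, hFcv, hFC, hface⟩ := hF
  refine ⟨hAcm F hFcl, hFcv.affine_image A, Set.image_mono hFC, ?_⟩
  rintro _ ⟨x, hx, rfl⟩ _ ⟨y, hy, rfl⟩ α hα0 hα1 hmem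
  have hcombo : α • A x + (1 - α) • A y = A (α • x + (1 - α) • y) :=
    (Convex.combo_affine_apply (by ring)).symm
  rw [hcombo] at hmem
  obtain ⟨z, hzF, hz⟩ := hmem
  have : α • x + (1 - α) • y ∈ F := by rwa [← hA hz]
  obtain ⟨hxF, hyF⟩ := hface x hx y hy α hα0 hα1 this
  exact ⟨Set.mem_image_of_mem A hxF, Set.mem_image_of_mem A hyF⟩

lemma isFace_preimage {A : E →ᵃ[ℝ] E'} {C : Set E} (hCcl : IsClosed C) (hCcv : Convex ℝ C)
    (hAc : Continuous A) {G : Set E'} (hG : IsFace (A '' C) G) :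
    IsFace C (A ⁻¹' G ∩ C) := by
  obtain ⟨hGcl, hGcv, hGC, hface⟩ := hG
  refine ⟨(hGcl.preimage hAc).inter hCcl, (hGcv.affine_preimage A).inter hCcv,
    Set.inter_subset_right, ?_⟩
  intro x hx y hy α hα0 hα1 hmem
  have hcombo : A (α • x + (1 - α) • y) = α • A x + (1 - α) • A y :=
    Convex.combo_affine_apply (by ring)
  have : α • A x + (1 - α) • A y ∈ G := by rw [← hcombo]; exact hmem.1
  obtain ⟨h1, h2⟩ := hface (A x) (Set.mem_image_of_mem A hx) (A y)
    (Set.mem_image_of_mem A hy) α hα0 hα1 this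
  exact ⟨⟨h1, hx⟩, ⟨h2, hy⟩⟩

end helpers

/-- Proposition 3.4(iii): for an injective affine map `A`, the image `A(C)` is amenable
if and only if `C` is amenable. -/
theorem amenable_affine_image {E E' : Type*}
    [NormedAddCommGroup E] [InnerProductSpace ℝ E] [FiniteDimensional ℝ E]
    [NormedAddCommGroup E'] [InnerProductSpace ℝ E'] [FiniteDimensional ℝ E']
    (A : E →ᵃ[ℝ] E') (hA : Function.Injective A)
    (C : Set E) (hCcl : IsClosed C) (hCcv : Convex ℝ C) :
    AmenableSet (A '' C) ↔ AmenableSet C := by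
  -- linear part is injective
  have hlin : Function.Injective A.linear := A.linear_injective_iff.2 hA
  -- antilipschitz constant
  obtain ⟨K, hK0, hKanti⟩ := A.linear.exists_antilipschitzWith (LinearMap.ker_eq_bot.2 hlin)
  have hdist : ∀ x y : E, dist (A x) (A y) = dist (A.linear x) (A.linear y) := by
    intro x y
    rw [dist_eq_norm, dist_eq_norm, ← map_sub A.linear x y,
      ← vsub_eq_sub (A x) (A y), ← A.linearMap_vsub, vsub_eq_sub]
  have hKA : AntilipschitzWith K ⇑A := by
    rw [antilipschitzWith_iff_le_mul_dist]
    intro x y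
    rw [hdist]
    exact hKanti.le_mul_dist x y
  -- lipschitz constant
  set L : ℝ≥0 := ‖LinearMap.toContinuousLinearMap A.linear‖₊ with hLdef
  have hLA : LipschitzWith L ⇑A := by
    rw [lipschitzWith_iff_dist_le_mul]
    intro x y
    rw [hdist]
    exact (LinearMap.toContinuousLinearMap A.linear).lipschitz.dist_le_mul x y
  have hAc : Continuous A := hLA.continuous
  have hAcm : IsClosedMap ⇑A := (hKA.isClosedEmbedding hLA.uniformContinuous).isClosedMap
  have hACcl : IsClosed (A '' C) := hAcm C hCcl
  have hspan : ∀ F : Set E, (affineSpan ℝ (A '' F) : Set E') = A '' (affineSpan ℝ F : Set E) := by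
    intro F
    rw [← AffineSubspace.map_span, AffineSubspace.coe_map]
  have hκpos : (0:ℝ) < (K : ℝ) * 1 * ((L : ℝ) + 1) := by positivity
  constructor
  · -- A '' C amenable → C amenable
    intro h F hF B hB
    have hGface : IsFace (A '' C) (A '' F) := isFace_image hA hAcm hF
    obtain ⟨κ, hκ, hh⟩ := h (A '' F) hGface (A '' B) (hLA.isBounded_image hB)
    refine ⟨(K : ℝ) * κ * ((L : ℝ) + 1), by positivity, ?_⟩
    rintro x ⟨hx1, hx2⟩
    have hFne : F.Nonempty := (affineSpan_nonempty ℝ).1 ⟨x, hx1⟩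
    have hCne : C.Nonempty := hFne.mono hF.2.2.1
    have hAx : A x ∈ (affineSpan ℝ (A '' F) : Set E') ∩ (A '' B) := by
      rw [hspan F]
      exact ⟨Set.mem_image_of_mem A hx1, Set.mem_image_of_mem A hx2⟩
    have h1 : infDist x F ≤ K * infDist (A x) (A '' F) :=
      le_infDist_image_anti hKA hFne (hAcm F hF.1) x
    have h2 : infDist (A x) (A '' F) ≤ κ * infDist (A x) (A '' C) := hh (A x) hAx
    have h3 : infDist (A x) (A '' C) ≤ L * infDist x C :=
      infDist_image_le_lip hLA hCne hCcl x
    calc infDist x F ≤ K * (κ * (L * infDist x C)) := by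
          refine h1.trans ?_
          gcongr
          exact h2.trans (by gcongr)
      _ = (K : ℝ) * κ * (L : ℝ) * infDist x C := by ring
      _ ≤ (K : ℝ) * κ * ((L : ℝ) + 1) * infDist x C := by
          have := infDist_nonneg (x := x) (s := C)
          gcongr
          linarith
  · -- C amenable → A '' C amenable
    intro h G hG B' hB'
    set F : Set E := A ⁻¹' G ∩ C with hFdef
    have hFface : IsFace C F := isFace_preimage hCcl hCcv hAc hG
    have hGF : A '' F = G := by
      rw [hFdef, Set.image_preimage_inter, Set.inter_eq_self_of_subset_left hG.2.2.1]
    obtain ⟨κ, hκ, hh⟩ := h F hFface (A ⁻¹' B') (hKA.isBounded_preimage hB')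
    refine ⟨(K : ℝ) * κ * ((L : ℝ) + 1), by positivity, ?_⟩
    rintro y ⟨hy1, hy2⟩
    rw [← hGF, hspan F] at hy1
    obtain ⟨x, hx1, rfl⟩ := hy1
    have hFne : F.Nonempty := (affineSpan_nonempty ℝ).1 ⟨x, hx1⟩
    have hCne : C.Nonempty := hFne.mono hFface.2.2.1
    have h1 : infDist (A x) G ≤ L * infDist x F := by
      rw [← hGF]
      exact infDist_image_le_lip hLA hFne hFface.1 x
    have h2 : infDist x F ≤ κ * infDist x C := hh x ⟨hx1, hy2⟩
    have h3 : infDist x C ≤ K * infDist (A x) (A '' C) :=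
      le_infDist_image_anti hKA hCne hACcl x
    calc infDist (A x) G ≤ L * (κ * (K * infDist (A x) (A '' C))) := by
          refine h1.trans ?_
          gcongr
          exact h2.trans (by gcongr)
      _ = (K : ℝ) * κ * (L : ℝ) * infDist (A x) (A '' C) := by ring
      _ ≤ (K : ℝ) * κ * ((L : ℝ) + 1) * infDist (A x) (A '' C) := by
          have := infDist_nonneg (x := A x) (s := A '' C)
          gcongr
          linarith
end

section
/- For every n, the doubly nonnegative cone D^n, consisting of all n×n real symmetric positive semidefinite matrices whose entries are all nonnegative, is an amenable closed convex cone (in the space of n×n real matrices with the Frobenius norm). -/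
open Metric Bornology

attribute [local instance] Matrix.frobeniusNormedAddCommGroup Matrix.frobeniusNormedSpace

/-- The doubly nonnegative cone: symmetric positive semidefinite matrices with
nonnegative entries. -/
def doublyNonnegativeCone (n : ℕ) : Set (Matrix (Fin n) (Fin n) ℝ) :=
  {X | X.PosSemidef ∧ ∀ i j, 0 ≤ X i j}

/-!
A nonempty face `F` of the doubly nonnegative cone `D` equals `D ∩ span F`. Let `A` be the sum of
a finite family spanning `F`. Every `z ∈ span F` is symmetric and vanishes on `ker A` and on the
zero pattern of `A`; since `A` is positive definite on `range A` and bounded below off its zero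
pattern, `A + z ∈ D` for all such `z` within a fixed distance `r` of `D`. If `x ∈ span F` is at
distance `d > 0` from `D`, then `d / (d + r) • (A + (r / d) • x)` lies in `D ∩ span F = F` at
distance `O(d)` from `x`: this is a Lipschitz error bound for `F`.
-/

open Matrix Filter Topology

section ConeFace

variable {E : Type*} [NormedAddCommGroup E] [NormedSpace ℝ E] {C F : Set E}

theorem IsFace.zero_mem (hF : IsFace C F) (hC : ∀ c : ℝ, 0 ≤ c → ∀ x ∈ C, c • x ∈ C)
    (hne : F.Nonempty) : (0 : E) ∈ F := by
  obtain ⟨x, hx⟩ := hne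
  have hxC := hF.2.2.1 hx
  refine (hF.2.2.2 _ (hC 2 zero_le_two x hxC) 0 (by simpa using hC 0 le_rfl x hxC) (1 / 2)
    (by norm_num) (by norm_num) ?_).2
  simpa [smul_smul] using hx

theorem IsFace.smul_mem (hF : IsFace C F) (hC : ∀ c : ℝ, 0 ≤ c → ∀ x ∈ C, c • x ∈ C)
    (h0 : (0 : E) ∈ F) {c : ℝ} (hc : 0 ≤ c) {x : E} (hx : x ∈ F) : c • x ∈ F := by
  rcases le_or_gt c 1 with hc1 | hc1
  · simpa using hF.2.1 hx h0 hc (sub_nonneg.2 hc1) (add_sub_cancel c 1)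
  · have hc0 : 0 < c := one_pos.trans hc1
    refine (hF.2.2.2 _ (hC c hc x (hF.2.2.1 hx)) 0 (hF.2.2.1 h0) c⁻¹ (inv_pos.2 hc0)
      (inv_lt_one_of_one_lt₀ hc1) ?_).1
    simpa [smul_smul, hc0.ne'] using hx

theorem IsFace.add_mem (hF : IsFace C F) (hC : ∀ c : ℝ, 0 ≤ c → ∀ x ∈ C, c • x ∈ C)
    (h0 : (0 : E) ∈ F) {x y : E} (hx : x ∈ F) (hy : y ∈ F) : x + y ∈ F := by
  have hmid : (1 / 2 : ℝ) • x + (1 / 2 : ℝ) • y ∈ F :=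
    hF.2.1 hx hy (by norm_num) (by norm_num) (by norm_num)
  have := hF.smul_mem hC h0 zero_le_two hmid
  rwa [smul_add, smul_smul, smul_smul, show (2 : ℝ) * (1 / 2) = 1 by norm_num, one_smul,
    one_smul] at this

theorem IsFace.exists_sub_of_mem_span (hF : IsFace C F)
    (hC : ∀ c : ℝ, 0 ≤ c → ∀ x ∈ C, c • x ∈ C) (h0 : (0 : E) ∈ F) {z : E}
    (hz : z ∈ Submodule.span ℝ F) : ∃ a ∈ F, ∃ b ∈ F, z = a - b := by
  induction hz using Submodule.span_induction with
  | mem w hw => exact ⟨w, hw, 0, h0, (sub_zero w).symm⟩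
  | zero => exact ⟨0, h0, 0, h0, (sub_zero 0).symm⟩
  | add u v _ _ hu hv =>
    obtain ⟨a, ha, b, hb, rfl⟩ := hu
    obtain ⟨a', ha', b', hb', rfl⟩ := hv
    exact ⟨a + a', hF.add_mem hC h0 ha ha', b + b', hF.add_mem hC h0 hb hb', by abel⟩
  | smul r w _ hw =>
    obtain ⟨a, ha, b, hb, rfl⟩ := hw
    rcases le_total 0 r with hr | hr
    · exact ⟨r • a, hF.smul_mem hC h0 hr ha, r • b, hF.smul_mem hC h0 hr hb, smul_sub r a b⟩
    · refine ⟨(-r) • b, hF.smul_mem hC h0 (neg_nonneg.2 hr) hb,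
        (-r) • a, hF.smul_mem hC h0 (neg_nonneg.2 hr) ha, ?_⟩
      simp only [neg_smul, smul_sub]
      abel

theorem IsFace.eq_inter_span (hF : IsFace C F) (hC : ∀ c : ℝ, 0 ≤ c → ∀ x ∈ C, c • x ∈ C)
    (hne : F.Nonempty) : F = C ∩ Submodule.span ℝ F := by
  have h0 := hF.zero_mem hC hne
  refine subset_antisymm (fun x hx => ⟨hF.2.2.1 hx, Submodule.subset_span hx⟩) ?_
  rintro z ⟨hzC, hzL⟩
  obtain ⟨a, ha, b, hb, rfl⟩ := hF.exists_sub_of_mem_span hC h0 hzL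
  -- `(a + b) / 2` is the midpoint of `a - b ∈ C` and `2 b ∈ C`.
  refine (hF.2.2.2 _ hzC _ (hC 2 zero_le_two b (hF.2.2.1 hb)) (1 / 2) (by norm_num)
    (by norm_num) ?_).1
  convert hF.2.1 ha hb (by norm_num : (0 : ℝ) ≤ 1 / 2) (by norm_num : (0 : ℝ) ≤ 1 - 1 / 2)
    (by norm_num) using 1
  module

theorem isAmenableFace_empty (C : Set E) : IsAmenableFace C ∅ := by
  intro B _
  refine ⟨1, one_pos, fun x hx => ?_⟩
  simp [AffineSubspace.span_empty] at hx

theorem isAmenableFace_of_eq_inter (hC : ∀ c : ℝ, 0 ≤ c → ∀ x ∈ C, c • x ∈ C)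
    {L : Submodule ℝ E} (hF : F = C ∩ L) {A : E} (hA : A ∈ F) {r : ℝ} (hr : 0 < r)
    (hAr : ∀ z ∈ L, ∀ y ∈ C, ‖z - y‖ ≤ r → A + z ∈ C) : IsAmenableFace C F := by
  subst hF
  intro B hB
  obtain ⟨R, hR, hBR⟩ := hB.subset_closedBall_lt 0 0
  have hCne : C.Nonempty := ⟨A, hA.1⟩
  refine ⟨(R + ‖A‖) / r + 1, by positivity, fun x ⟨hxF, hxB⟩ => ?_⟩
  have hxL : x ∈ L :=
    Submodule.span_le.2 (fun _ h => h.2) (affineSpan_le_toAffineSubspace_span hxF)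
  have hxR : ‖x - A‖ ≤ R + ‖A‖ :=
    (norm_sub_le x A).trans (by simpa using add_le_add_right (hBR hxB) ‖A‖)
  rw [mul_comm, ← div_le_iff₀ (by positivity), le_infDist hCne]
  intro y hy
  rw [div_le_iff₀ (by positivity)]
  rcases (dist_nonneg (x := x) (y := y)).eq_or_lt with hd | hd
  · have hxC : x ∈ C := dist_eq_zero.1 hd.symm ▸ hy
    rw [infDist_zero_of_mem (show x ∈ C ∩ L from ⟨hxC, hxL⟩)]
    positivity
  set d := dist x y
  obtain ⟨t, ht, htd⟩ : ∃ t : ℝ, 0 < t ∧ t * d = r :=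
    ⟨r / d, by positivity, div_mul_cancel₀ r hd.ne'⟩
  have hzC : A + t • x ∈ C := by
    refine hAr _ (L.smul_mem t hxL) _ (hC t ht.le y hy) ?_
    rw [← smul_sub, norm_smul, ← dist_eq_norm, Real.norm_of_nonneg ht.le, htd]
  set q := (d / (d + r)) • (A + t • x)
  have hq : q ∈ C ∩ L :=
    ⟨hC _ (by positivity) _ hzC, L.smul_mem _ (L.add_mem hA.2 (L.smul_mem t hxL))⟩
  have hxq : x - q = (d / (d + r)) • (x - A) := by
    have hcoef : d / (d + r) * t = 1 - d / (d + r) := by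
      rw [← htd]
      field_simp
      ring
    simp only [q, smul_add, smul_smul, hcoef]
    module
  calc infDist x (C ∩ L) ≤ dist x q := infDist_le_dist_of_mem hq
    _ = d / (d + r) * ‖x - A‖ := by
      rw [dist_eq_norm, hxq, norm_smul, Real.norm_of_nonneg (by positivity)]
    _ ≤ d / r * (R + ‖A‖) := by gcongr; linarith
    _ ≤ d * ((R + ‖A‖) / r + 1) := by
      rw [div_mul_eq_mul_div, mul_div_assoc]
      nlinarith

end ConeFace

theorem Submodule.exists_pos_le_of_smul_invariant {V : Type*} [NormedAddCommGroup V]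
    [NormedSpace ℝ V] [FiniteDimensional ℝ V] (S : Submodule ℝ V) {g : V → ℝ}
    (hg : ContinuousOn g {0}ᶜ) (hsmul : ∀ t : ℝ, t ≠ 0 → ∀ v, g (t • v) = g v)
    (hpos : ∀ v ∈ S, v ≠ 0 → 0 < g v) : ∃ c > 0, ∀ v ∈ S, v ≠ 0 → c ≤ g v := by
  set K := (S : Set V) ∩ Metric.sphere 0 1
  have hKc : IsCompact K := (isCompact_sphere 0 1).inter_left S.closed_of_finiteDimensional
  have hK0 : K ⊆ {0}ᶜ := fun v hv => ne_of_mem_sphere hv.2 one_ne_zero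
  have hnormalize : ∀ v ∈ S, v ≠ 0 → ‖v‖⁻¹ • v ∈ K ∧ g (‖v‖⁻¹ • v) = g v := fun v hv hv0 =>
    ⟨⟨S.smul_mem _ hv, by simp [norm_smul, hv0]⟩, hsmul _ (by simpa using hv0) v⟩
  rcases K.eq_empty_or_nonempty with hK | hK
  · exact ⟨1, one_pos, fun v hv hv0 => by simpa [hK] using (hnormalize v hv hv0).1⟩
  obtain ⟨v₀, hv₀, hmin⟩ := hKc.exists_isMinOn hK (hg.mono hK0)
  refine ⟨g v₀, hpos v₀ hv₀.1 (hK0 hv₀), fun v hv hv0 => ?_⟩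
  rw [← (hnormalize v hv hv0).2]
  exact hmin (hnormalize v hv hv0).1

namespace Matrix

variable {m n : Type*} [Fintype m] [Fintype n]

theorem norm_apply_le_frobenius_norm (M : Matrix m n ℝ) (i : m) (j : n) :
    ‖M i j‖ ≤ ‖M‖ :=
  (PiLp.norm_apply_le (WithLp.toLp 2 (M i)) j).trans
    (PiLp.norm_apply_le (WithLp.toLp 2 fun i => WithLp.toLp 2 (M i)) i)

theorem abs_dotProduct_mulVec_le_frobenius_norm (u : Matrix m m ℝ) (v : m → ℝ) :
    |v ⬝ᵥ (u *ᵥ v)| ≤ ‖u‖ * (v ⬝ᵥ v) := by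
  have hv : ‖WithLp.toLp 2 v‖ ^ 2 = v ⬝ᵥ v := by
    rw [EuclideanSpace.norm_sq_eq]
    simp [dotProduct, sq]
  have hquad : v ⬝ᵥ (u *ᵥ v) = (replicateRow Unit v * u * replicateCol Unit v) () () := by
    simp only [Matrix.mul_apply, replicateRow_apply, replicateCol_apply, dotProduct_mulVec]
    rfl
  calc |v ⬝ᵥ (u *ᵥ v)| ≤ ‖replicateRow Unit v * u * replicateCol Unit v‖ := by
        rw [hquad]; exact norm_apply_le_frobenius_norm _ () ()
    _ ≤ ‖replicateRow Unit v‖ * ‖u‖ * ‖replicateCol Unit v‖ :=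
        (frobenius_norm_mul _ _).trans (by gcongr; exact frobenius_norm_mul _ _)
    _ = ‖u‖ * (v ⬝ᵥ v) := by
        rw [frobenius_norm_replicateRow, frobenius_norm_replicateCol, ← hv]; ring

theorem IsHermitian.dotProduct_mulVec_comm {A : Matrix m m ℝ} (hA : A.IsHermitian)
    (x y : m → ℝ) :
    x ⬝ᵥ (A *ᵥ y) = y ⬝ᵥ (A *ᵥ x) := by
  rw [dotProduct_mulVec, ← mulVec_transpose, (isHermitian_iff_isSymm.1 hA).eq, dotProduct_comm]

theorem IsHermitian.disjoint_range_ker {A : Matrix m m ℝ} (hA : A.IsHermitian) :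
    Disjoint (LinearMap.range A.mulVecLin) (LinearMap.ker A.mulVecLin) := by
  rw [Submodule.disjoint_def]
  rintro _ ⟨w, rfl⟩ hker
  rw [LinearMap.mem_ker, mulVecLin_apply, mulVecLin_apply] at hker
  rw [mulVecLin_apply, ← dotProduct_self_eq_zero, hA.dotProduct_mulVec_comm, hker,
    dotProduct_zero]

theorem IsHermitian.range_sup_ker {A : Matrix m m ℝ} (hA : A.IsHermitian) :
    LinearMap.range A.mulVecLin ⊔ LinearMap.ker A.mulVecLin = ⊤ :=
  Submodule.eq_top_of_disjoint _ _ (LinearMap.finrank_range_add_finrank_ker _).ge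
    hA.disjoint_range_ker

theorem PosSemidef.exists_pos_mul_dotProduct_le {A : Matrix m m ℝ} (hA : A.PosSemidef) :
    ∃ c > 0, ∀ v ∈ LinearMap.range A.mulVecLin, c * (v ⬝ᵥ v) ≤ v ⬝ᵥ (A *ᵥ v) := by
  have hself : ∀ v : m → ℝ, v ≠ 0 → 0 < v ⬝ᵥ v := fun v hv =>
    by simpa using dotProduct_star_self_pos_iff.2 hv
  set g : (m → ℝ) → ℝ := fun v => v ⬝ᵥ (A *ᵥ v) / (v ⬝ᵥ v)
  have hg : ContinuousOn g {0}ᶜ :=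
    ContinuousOn.div (by fun_prop) (by fun_prop) fun v hv => (hself v hv).ne'
  have hsmul : ∀ t : ℝ, t ≠ 0 → ∀ v, g (t • v) = g v := by
    intro t ht v
    simp only [g, mulVec_smul, smul_dotProduct, dotProduct_smul, smul_eq_mul, ← mul_assoc]
    exact mul_div_mul_left _ _ (mul_ne_zero ht ht)
  have hpos : ∀ v ∈ LinearMap.range A.mulVecLin, v ≠ 0 → 0 < g v := by
    intro v hv hv0
    refine div_pos (lt_of_le_of_ne (by simpa using hA.dotProduct_mulVec_nonneg v)
      fun h => hv0 ?_) (hself v hv0)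
    have hAv : A *ᵥ v = 0 := (hA.dotProduct_mulVec_zero_iff v).1 (by simpa using h.symm)
    exact Submodule.disjoint_def.1 hA.isHermitian.disjoint_range_ker v hv hAv
  obtain ⟨c, hc, hcg⟩ :=
    (LinearMap.range A.mulVecLin).exists_pos_le_of_smul_invariant hg hsmul hpos
  refine ⟨c, hc, fun v hv => ?_⟩
  rcases eq_or_ne v 0 with rfl | hv0
  · simp
  · exact (le_div_iff₀ (hself v hv0)).1 (hcg v hv hv0)

theorem IsHermitian.dotProduct_mulVec_add_of_mulVec_eq_zero {M : Matrix m m ℝ}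
    (hM : M.IsHermitian) (v w : m → ℝ) (hw : M *ᵥ w = 0) :
    (v + w) ⬝ᵥ (M *ᵥ (v + w)) = v ⬝ᵥ (M *ᵥ v) := by
  rw [mulVec_add, hw, add_zero, add_dotProduct, hM.dotProduct_mulVec_comm w, hw, dotProduct_zero,
    add_zero]

theorem PosSemidef.exists_pos_forall_posSemidef_add {A : Matrix m m ℝ} (hA : A.PosSemidef) :
    ∃ r > 0, ∀ z : Matrix m m ℝ, z.IsHermitian → (∀ v, A *ᵥ v = 0 → z *ᵥ v = 0) →
      ∀ y : Matrix m m ℝ, y.PosSemidef → ‖z - y‖ ≤ r → (A + z).PosSemidef := by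
  obtain ⟨c, hc, hcA⟩ := hA.exists_pos_mul_dotProduct_le
  refine ⟨c, hc, fun z hz hker y hy hzy => ?_⟩
  refine .of_dotProduct_mulVec_nonneg (hA.isHermitian.add hz) fun v => ?_
  obtain ⟨v₁, hv₁, v₂, hv₂, rfl⟩ :=
    Submodule.mem_sup.1 (hA.isHermitian.range_sup_ker ▸ Submodule.mem_top (x := v))
  have hAv₂ : A *ᵥ v₂ = 0 := hv₂
  rw [star_trivial, (hA.isHermitian.add hz).dotProduct_mulVec_add_of_mulVec_eq_zero v₁ v₂
    (by rw [add_mulVec, hAv₂, hker v₂ hAv₂, add_zero])]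
  have hy₁ : 0 ≤ v₁ ⬝ᵥ (y *ᵥ v₁) := by simpa using hy.dotProduct_mulVec_nonneg v₁
  have hzy₁ := abs_le.1 (abs_dotProduct_mulVec_le_frobenius_norm (z - y) v₁)
  have hv₁₁ : 0 ≤ v₁ ⬝ᵥ v₁ := by simpa using dotProduct_star_self_nonneg v₁
  have hsplit : v₁ ⬝ᵥ ((A + z) *ᵥ v₁) =
      v₁ ⬝ᵥ (A *ᵥ v₁) + v₁ ⬝ᵥ (y *ᵥ v₁) + v₁ ⬝ᵥ ((z - y) *ᵥ v₁) := by
    simp only [add_mulVec, sub_mulVec, dotProduct_add, dotProduct_sub]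
    ring
  rw [hsplit]
  nlinarith [hcA v₁ hv₁, mul_le_mul_of_nonneg_right hzy hv₁₁]

theorem exists_pos_forall_nonneg_add {A : Matrix m n ℝ} (hA : ∀ i j, 0 ≤ A i j) :
    ∃ r > 0, ∀ z : Matrix m n ℝ, (∀ i j, A i j = 0 → z i j = 0) →
      ∀ y : Matrix m n ℝ, (∀ i j, 0 ≤ y i j) → ‖z - y‖ ≤ r → ∀ i j, 0 ≤ (A + z) i j := by
  have hsmall : ∀ᶠ r in 𝓝[>] (0 : ℝ), ∀ i j, A i j ≠ 0 → r ≤ A i j := by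
    refine eventually_all.2 fun i => eventually_all.2 fun j => ?_
    rcases (hA i j).eq_or_lt with h | h
    · exact .of_forall fun _ h' => (h' h.symm).elim
    · filter_upwards [nhdsWithin_le_nhds (eventually_le_nhds h)] with r hr _ using hr
  obtain ⟨r, hrA, hr⟩ := (hsmall.and self_mem_nhdsWithin).exists
  refine ⟨r, hr, fun z hz y hy hzy i j => ?_⟩
  rw [add_apply]
  by_cases h : A i j = 0
  · simp [h, hz i j h]
  · have := (norm_apply_le_frobenius_norm (z - y) i j).trans hzy
    rw [sub_apply, Real.norm_eq_abs] at this
    linarith [hrA i j h, hy i j, (abs_le.1 this).1]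

end Matrix

def dnnFaceSubspace {n : ℕ} (A : Matrix (Fin n) (Fin n) ℝ) :
    Submodule ℝ (Matrix (Fin n) (Fin n) ℝ) where
  carrier := {X | X.IsHermitian ∧ (∀ v, A *ᵥ v = 0 → X *ᵥ v = 0) ∧ ∀ i j, A i j = 0 → X i j = 0}
  add_mem' := fun ⟨hX, hXk, hXz⟩ ⟨hY, hYk, hYz⟩ =>
    ⟨hX.add hY, fun v hv => by rw [add_mulVec, hXk v hv, hYk v hv, add_zero],
      fun i j h => by rw [Matrix.add_apply, hXz i j h, hYz i j h, add_zero]⟩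
  zero_mem' := ⟨isHermitian_zero, fun v _ => zero_mulVec v, fun _ _ _ => rfl⟩
  smul_mem' := fun c X ⟨hX, hXk, hXz⟩ =>
    ⟨IsSelfAdjoint.smul (IsSelfAdjoint.all c) hX,
      fun v hv => by rw [smul_mulVec, hXk v hv, smul_zero],
      fun i j h => by rw [Matrix.smul_apply, hXz i j h, smul_zero]⟩

namespace doublyNonnegativeCone

variable {n : ℕ}

theorem isClosed : IsClosed (doublyNonnegativeCone n) := by
  have hpsd : IsClosed {X : Matrix (Fin n) (Fin n) ℝ | X.PosSemidef} := by
    simp only [posSemidef_iff_dotProduct_mulVec, Set.ofPred_and, Set.ofPred_forall]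
    exact (isClosed_eq continuous_id.matrix_conjTranspose continuous_id).inter
      (isClosed_iInter fun v => isClosed_le continuous_const (by fun_prop))
  have hnonneg : IsClosed {X : Matrix (Fin n) (Fin n) ℝ | ∀ i j, 0 ≤ X i j} := by
    simp only [Set.ofPred_forall]
    exact isClosed_iInter fun i => isClosed_iInter fun j =>
      isClosed_le continuous_const ((continuous_apply j).comp (continuous_apply i))
  exact hpsd.inter hnonneg

theorem smul_mem {c : ℝ} (hc : 0 ≤ c) {X : Matrix (Fin n) (Fin n) ℝ}
    (hX : X ∈ doublyNonnegativeCone n) : c • X ∈ doublyNonnegativeCone n :=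
  ⟨hX.1.smul hc, fun i j => mul_nonneg hc (hX.2 i j)⟩

theorem add_mem {X Y : Matrix (Fin n) (Fin n) ℝ} (hX : X ∈ doublyNonnegativeCone n)
    (hY : Y ∈ doublyNonnegativeCone n) : X + Y ∈ doublyNonnegativeCone n :=
  ⟨hX.1.add hY.1, fun i j => add_nonneg (hX.2 i j) (hY.2 i j)⟩

theorem sum_mem {t : Finset (Matrix (Fin n) (Fin n) ℝ)} (ht : ↑t ⊆ doublyNonnegativeCone n) :
    ∑ X ∈ t, X ∈ doublyNonnegativeCone n :=
  Finset.sum_induction id (· ∈ doublyNonnegativeCone n) (fun _ _ => add_mem)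
    ⟨PosSemidef.zero, fun _ _ => le_rfl⟩ fun _ hX => ht hX

theorem convex : Convex ℝ (doublyNonnegativeCone n) :=
  fun _ hX _ hY _ _ ha hb _ => add_mem (smul_mem ha hX) (smul_mem hb hY)

theorem mem_dnnFaceSubspace_add {X Y : Matrix (Fin n) (Fin n) ℝ}
    (hX : X ∈ doublyNonnegativeCone n) (hY : Y ∈ doublyNonnegativeCone n) :
    X ∈ dnnFaceSubspace (X + Y) := by
  refine ⟨hX.1.isHermitian, fun v hv => ?_, fun i j h => ?_⟩
  · have hXv : 0 ≤ v ⬝ᵥ (X *ᵥ v) := by simpa using hX.1.dotProduct_mulVec_nonneg v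
    have hYv : 0 ≤ v ⬝ᵥ (Y *ᵥ v) := by simpa using hY.1.dotProduct_mulVec_nonneg v
    have hsum : v ⬝ᵥ (X *ᵥ v) + v ⬝ᵥ (Y *ᵥ v) = 0 := by
      rw [← dotProduct_add, ← add_mulVec, hv, dotProduct_zero]
    exact (hX.1.dotProduct_mulVec_zero_iff v).1 (by rw [star_trivial]; linarith)
  · rw [Matrix.add_apply] at h
    linarith [hX.2 i j, hY.2 i j]

theorem mem_dnnFaceSubspace_sum {t : Finset (Matrix (Fin n) (Fin n) ℝ)}
    (ht : ↑t ⊆ doublyNonnegativeCone n) {X : Matrix (Fin n) (Fin n) ℝ} (hX : X ∈ t) :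
    X ∈ dnnFaceSubspace (∑ Y ∈ t, Y) := by
  rw [← t.add_sum_erase (fun Y => Y) hX]
  exact mem_dnnFaceSubspace_add (ht hX)
    (sum_mem ((Finset.coe_subset.2 (t.erase_subset X)).trans ht))

theorem exists_pos_forall_add_mem {A : Matrix (Fin n) (Fin n) ℝ}
    (hA : A ∈ doublyNonnegativeCone n) :
    ∃ r > 0, ∀ z ∈ dnnFaceSubspace A, ∀ y ∈ doublyNonnegativeCone n, ‖z - y‖ ≤ r →
      A + z ∈ doublyNonnegativeCone n := by
  obtain ⟨r₁, hr₁, hpsd⟩ := hA.1.exists_pos_forall_posSemidef_add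
  obtain ⟨r₂, hr₂, hnonneg⟩ := exists_pos_forall_nonneg_add hA.2
  refine ⟨min r₁ r₂, lt_min hr₁ hr₂, fun z ⟨hz, hzk, hzz⟩ y hy hzy => ⟨?_, ?_⟩⟩
  · exact hpsd z hz hzk y hy.1 (hzy.trans (min_le_left _ _))
  · exact hnonneg z hzz y hy.2 (hzy.trans (min_le_right _ _))

end doublyNonnegativeCone

/-- Corollary 3.5(i): the doubly nonnegative cone is an amenable closed convex cone
(with respect to the Frobenius norm). -/
theorem doublyNonnegative_amenable (n : ℕ) :
    IsClosed (doublyNonnegativeCone n) ∧ Convex ℝ (doublyNonnegativeCone n) ∧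
    (∀ c : ℝ, 0 ≤ c → ∀ X ∈ doublyNonnegativeCone n, c • X ∈ doublyNonnegativeCone n) ∧
    AmenableSet (doublyNonnegativeCone n) := by
  have hcone : ∀ c : ℝ, 0 ≤ c → ∀ X ∈ doublyNonnegativeCone n, c • X ∈ doublyNonnegativeCone n :=
    fun c hc X hX => doublyNonnegativeCone.smul_mem hc hX
  refine ⟨doublyNonnegativeCone.isClosed, doublyNonnegativeCone.convex, hcone, fun F hF => ?_⟩
  rcases F.eq_empty_or_nonempty with rfl | hne
  · exact isAmenableFace_empty _
  have hFeq := hF.eq_inter_span hcone hne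
  obtain ⟨b, htF, hspan, hli⟩ := exists_linearIndependent ℝ F
  obtain ⟨t, rfl⟩ := hli.setFinite.exists_finset_coe
  have htC : ↑t ⊆ doublyNonnegativeCone n := htF.trans hF.2.2.1
  have hA : ∑ X ∈ t, X ∈ F := by
    rw [hFeq]
    exact ⟨doublyNonnegativeCone.sum_mem htC,
      Submodule.sum_mem _ fun X hX => Submodule.subset_span (htF hX)⟩
  have hspan_le : Submodule.span ℝ F ≤ dnnFaceSubspace (∑ X ∈ t, X) :=
    hspan ▸ Submodule.span_le.2 fun X hX => doublyNonnegativeCone.mem_dnnFaceSubspace_sum htC hX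
  obtain ⟨r, hr, hAr⟩ := doublyNonnegativeCone.exists_pos_forall_add_mem (hF.2.2.1 hA)
  exact isAmenableFace_of_eq_inter hcone hFeq hA hr fun z hz => hAr z (hspan_le hz)
end

section
/- Every spectrahedral set is amenable: for every n and every affine subspace V of the space of n×n real matrices, the set PSD^n ∩ V (where PSD^n is the cone of n×n real symmetric positive semidefinite matrices) is an amenable closed convex set, and so is the image of PSD^n ∩ V under any injective affine map. -/
/-!
Let `F` be a nonempty face of `C = PSD ∩ V` and pick `x₀ ∈ F` whose kernel has minimal dimension;
then `ker x₀ ⊆ ker y` for every `y ∈ F`. Let `P` be the orthogonal projection onto `(ker x₀)ᗮ` and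
`W` the space of symmetric `X` with `X P = X`. Then `F ⊆ W`, and `x₀` is a relative interior point
of `G = PSD ∩ W`: the `δ`-ball around `x₀` in `W` is positive semidefinite. Since `F` is a face,
`G ∩ V ⊆ F`. For `x ∈ aff F` and `c ∈ C`, the matrix `g = P c P` lies in `G` with
`‖x - g‖ ≤ ‖x - c‖`, and moving `x` towards `x₀` by the fraction `‖x - g‖ / (‖x - g‖ + δ)` lands
in `G ∩ V ⊆ F`. Hence `dist(x, F) ≤ ‖x - x₀‖ / δ · dist(x, C)`.

Injective affine maps on finite-dimensional spaces are bi-Lipschitz, so they preserve amenability.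
-/

open Metric Bornology

attribute [local instance] Matrix.frobeniusNormedAddCommGroup Matrix.frobeniusNormedSpace

/-- The cone of `n × n` real symmetric positive semidefinite matrices. -/
def psdCone (n : ℕ) : Set (Matrix (Fin n) (Fin n) ℝ) := {X | X.PosSemidef}

theorem infDist_le_mul_infDist_of_forall {α β : Type*} [PseudoMetricSpace α]
    [PseudoMetricSpace β] {x : α} {y : β} {s : Set α} {t : Set β} {K : ℝ} (hK : 0 ≤ K)
    (ht : t.Nonempty) (h : ∀ b ∈ t, ∃ a ∈ s, dist x a ≤ K * dist y b) :
    infDist x s ≤ K * infDist y t := by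
  have : Nonempty t := ht.to_subtype
  rw [infDist_eq_iInf (s := t), Real.mul_iInf_of_nonneg hK]
  refine le_ciInf fun b => ?_
  obtain ⟨a, ha, hab⟩ := h b b.2
  exact (infDist_le_dist_of_mem ha).trans hab

section Faces

variable {E : Type*} [NormedAddCommGroup E] [NormedSpace ℝ E]

theorem IsFace.mem_of_closedBall_inter_subset {C F : Set E} {W : AffineSubspace ℝ E}
    {x₀ y : E} {δ : ℝ} (hF : IsFace C F) (hx₀ : x₀ ∈ F) (hx₀W : x₀ ∈ W) (hδ : 0 < δ)
    (hball : closedBall x₀ δ ∩ W ⊆ C) (hy : y ∈ C) (hyW : y ∈ W) : y ∈ F := by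
  rcases eq_or_ne y x₀ with rfl | hne
  · exact hx₀
  have hd : 0 < dist x₀ y := dist_pos.2 hne.symm
  set t := δ / dist x₀ y
  have ht : 0 < t := div_pos hδ hd
  -- `x₀` lies strictly between `y` and the point `z ∈ C` reached by pushing `x₀` away from `y`
  set z := t • (x₀ - y) + x₀
  have hz : z ∈ C := by
    refine hball ⟨?_, W.smul_vsub_vadd_mem t hx₀W hyW hx₀W⟩
    rw [mem_closedBall, dist_eq_norm, add_sub_cancel_right, norm_smul, Real.norm_of_nonneg ht.le,
      ← dist_eq_norm, div_mul_cancel₀ _ hd.ne']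
  have hcombo : (1 + t)⁻¹ • z + (1 - (1 + t)⁻¹) • y = x₀ := by
    have : (1 + t) ≠ 0 := by positivity
    simp only [z]
    match_scalars <;> field_simp <;> ring
  refine (hF.2.2.2 z hz y hy (1 + t)⁻¹ (by positivity) (inv_lt_one_of_one_lt₀ (by linarith))
    ?_).2
  rw [hcombo]
  exact hx₀

theorem lineMap_mem_of_closedBall_inter_subset {G : Set E} {W : AffineSubspace ℝ E}
    {x₀ x g : E} {δ : ℝ} (hG : Convex ℝ G) (hGW : G ⊆ W) (hδ : 0 < δ)
    (hball : closedBall x₀ δ ∩ W ⊆ G) (hx₀ : x₀ ∈ W) (hx : x ∈ W) (hg : g ∈ G) :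
    AffineMap.lineMap x x₀ (dist x g / (dist x g + δ)) ∈ G := by
  rcases (dist_nonneg (x := x) (y := g)).eq_or_lt with hs | hs
  · rw [← hs, zero_div, AffineMap.lineMap_apply_zero, dist_eq_zero.1 hs.symm]
    exact hg
  set s := dist x g
  have hs0 : s ≠ 0 := hs.ne'
  -- the point is a convex combination of `g` and the point `y` at distance `δ` from `x₀` in the
  -- direction `x - g`
  set y := (δ / s) • (x - g) + x₀
  have hy : y ∈ G := by
    refine hball ⟨?_, W.smul_vsub_vadd_mem _ hx (hGW hg) hx₀⟩
    rw [mem_closedBall, dist_eq_norm, add_sub_cancel_right, norm_smul,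
      Real.norm_of_nonneg (by positivity), ← dist_eq_norm, div_mul_cancel₀ _ hs0]
  have hsδ : s + δ ≠ 0 := by positivity
  have hcombo :
      AffineMap.lineMap x x₀ (s / (s + δ)) = (δ / (s + δ)) • g + (s / (s + δ)) • y := by
    rw [AffineMap.lineMap_apply_module]
    simp only [y]
    match_scalars <;> field_simp <;> ring
  rw [hcombo]
  exact hG hg hy (by positivity) (by positivity) (by rw [← add_div, add_comm, div_self hsδ])

theorem infDist_le_of_closedBall_inter_subset {C F G : Set E} {W V : AffineSubspace ℝ E}
    {x₀ x : E} {δ : ℝ} (hG : Convex ℝ G) (hGW : G ⊆ W) (hδ : 0 < δ)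
    (hball : closedBall x₀ δ ∩ W ⊆ G) (hx₀W : x₀ ∈ W) (hx₀V : x₀ ∈ V) (hGV : G ∩ V ⊆ F)
    (hC : C.Nonempty) (hproj : ∀ c ∈ C, ∃ g ∈ G, dist x g ≤ dist x c) (hxW : x ∈ W)
    (hxV : x ∈ V) : infDist x F ≤ dist x x₀ / δ * infDist x C := by
  refine infDist_le_mul_infDist_of_forall (by positivity) hC fun c hc => ?_
  obtain ⟨g, hg, hgc⟩ := hproj c hc
  have hs := dist_nonneg (x := x) (y := g)
  refine ⟨_, hGV ⟨lineMap_mem_of_closedBall_inter_subset hG hGW hδ hball hx₀W hxW hg,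
    AffineMap.lineMap_mem _ hxV hx₀V⟩, ?_⟩
  rw [dist_left_lineMap, Real.norm_of_nonneg (by positivity)]
  calc dist x g / (dist x g + δ) * dist x x₀ ≤ dist x g / δ * dist x x₀ := by
        gcongr
        linarith
    _ ≤ dist x c / δ * dist x x₀ := by gcongr
    _ = dist x x₀ / δ * dist x c := by ring

theorem isAmenableFace_of_closedBall_inter_subset {C F G : Set E} {W V : AffineSubspace ℝ E}
    {x₀ : E} {δ : ℝ} (hG : Convex ℝ G) (hGW : G ⊆ W) (hδ : 0 < δ)
    (hball : closedBall x₀ δ ∩ W ⊆ G) (hx₀ : x₀ ∈ F) (hFW : F ⊆ W) (hFV : F ⊆ V)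
    (hGV : G ∩ V ⊆ F) (hC : C.Nonempty)
    (hproj : ∀ x ∈ W, ∀ c ∈ C, ∃ g ∈ G, dist x g ≤ dist x c) :
    IsAmenableFace C F := by
  intro B hB
  obtain ⟨r, hr, hBr⟩ := hB.subset_closedBall_lt 0 x₀
  refine ⟨r / δ, by positivity, fun x ⟨hxF, hxB⟩ => ?_⟩
  have hxW : x ∈ W := affineSpan_le.2 hFW hxF
  calc infDist x F ≤ dist x x₀ / δ * infDist x C :=
        infDist_le_of_closedBall_inter_subset hG hGW hδ hball (hFW hx₀) (hFV hx₀) hGV hC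
          (hproj x hxW) hxW (affineSpan_le.2 hFV hxF)
    _ ≤ r / δ * infDist x C := by
        gcongr
        · exact infDist_nonneg
        · exact hBr hxB

end Faces

section Image

variable {E E' : Type*} [NormedAddCommGroup E] [NormedSpace ℝ E] [NormedAddCommGroup E']
  [NormedSpace ℝ E']

theorem IsFace.preimage {C F : Set E'} (hF : IsFace C F) {A : E →ᵃ[ℝ] E'} (hAc : Continuous A) :
    IsFace (A ⁻¹' C) (A ⁻¹' F) := by
  obtain ⟨hFc, hFconv, hFC, hface⟩ := hF
  refine ⟨hFc.preimage hAc, hFconv.affine_preimage A, Set.preimage_mono hFC,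
    fun x hx y hy α hα hα1 hxy => ?_⟩
  rw [Set.mem_preimage, Convex.combo_affine_apply (by ring)] at hxy
  exact hface (A x) hx (A y) hy α hα hα1 hxy

theorem AmenableSet.image [FiniteDimensional ℝ E] {C : Set E} (hC : AmenableSet C)
    (A : E →ᵃ[ℝ] E') (hA : Function.Injective A) : AmenableSet (A '' C) := by
  obtain ⟨L, hL⟩ := A.lipschitzWith_of_finiteDimensional
  obtain ⟨K, hK⟩ := A.antilipschitzWith_of_finiteDimensional hA
  intro F' hF' B' hB'
  have hF'A : A '' (A ⁻¹' F') = F' :=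
    Set.image_preimage_eq_of_subset (hF'.2.2.1.trans (Set.image_subset_range _ _))
  have hface : IsFace C (A ⁻¹' F') := by
    simpa only [Set.preimage_image_eq _ hA] using hF'.preimage A.continuous_of_finiteDimensional
  obtain ⟨κ, hκ, hκB⟩ := hC _ hface (A ⁻¹' B') (hK.isBounded_preimage hB')
  refine ⟨L * κ * K + 1, by positivity, ?_⟩
  rintro _ ⟨hxF, hxB⟩
  rw [← hF'A, ← AffineSubspace.map_span, AffineSubspace.coe_map] at hxF
  obtain ⟨x, hxF, rfl⟩ := hxF
  have hFne : (A ⁻¹' F').Nonempty := (affineSpan_nonempty (k := ℝ)).1 ⟨x, hxF⟩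
  have hCne : (A '' C).Nonempty := (hFne.mono hface.2.2.1).image A
  calc infDist (A x) F' ≤ L * infDist x (A ⁻¹' F') :=
        infDist_le_mul_infDist_of_forall L.2 hFne fun b hb => ⟨A b, hb, hL.dist_le_mul x b⟩
    _ ≤ L * (κ * infDist x C) := by gcongr; exact hκB x ⟨hxF, hxB⟩
    _ ≤ L * (κ * (K * infDist (A x) (A '' C))) := by
        gcongr
        refine infDist_le_mul_infDist_of_forall K.2 hCne ?_
        rintro _ ⟨c, hc, rfl⟩
        exact ⟨c, hc, hK.le_mul_dist x c⟩
    _ ≤ (L * κ * K + 1) * infDist (A x) (A '' C) := by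
        linarith [infDist_nonneg (x := A x) (s := A '' C)]

end Image

theorem exists_pos_mul_norm_sq_le {E : Type*} [NormedAddCommGroup E] [NormedSpace ℝ E]
    [FiniteDimensional ℝ E] (K : Submodule ℝ E) {q : E → ℝ} (hq : Continuous q)
    (hsmul : ∀ (c : ℝ) u, q (c • u) = c ^ 2 * q u) (hpos : ∀ u ∈ K, u ≠ 0 → 0 < q u) :
    ∃ δ > 0, ∀ u ∈ K, δ * ‖u‖ ^ 2 ≤ q u := by
  have hq0 : q 0 = 0 := by simpa using hsmul 0 0
  have hunit {u : E} (hu : u ∈ K) (hu0 : u ≠ 0) : ‖u‖⁻¹ • u ∈ sphere 0 1 ∩ (K : Set E) :=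
    ⟨by simp [norm_smul, hu0], K.smul_mem _ hu⟩
  -- `δ` is the minimum of `q` on the unit sphere of `K`
  rcases (sphere (0 : E) 1 ∩ (K : Set E)).eq_empty_or_nonempty with hS | hS
  · refine ⟨1, one_pos, fun u hu => ?_⟩
    obtain rfl : u = 0 := by_contra fun hu0 => (hS ▸ hunit hu hu0 : _ ∈ (∅ : Set E))
    simp [hq0]
  obtain ⟨u₀, ⟨hu₀, hu₀K⟩, hmin⟩ := ((isCompact_sphere (0 : E) 1).inter_right
    K.closed_of_finiteDimensional).exists_isMinOn hS hq.continuousOn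
  refine ⟨q u₀, hpos u₀ hu₀K (ne_zero_of_mem_unit_sphere ⟨u₀, hu₀⟩), fun u hu => ?_⟩
  rcases eq_or_ne u 0 with rfl | hu0
  · simp [hq0]
  have := hmin (hunit hu hu0)
  rw [Set.mem_ofPred_eq, hsmul, inv_pow] at this
  have hnorm : 0 < ‖u‖ ^ 2 := by positivity
  calc q u₀ * ‖u‖ ^ 2 ≤ (‖u‖ ^ 2)⁻¹ * q u * ‖u‖ ^ 2 := by gcongr
    _ = q u := by field_simp

namespace Matrix

open scoped RealInnerProductSpace

theorem convex_posSemidef {ι : Type*} : Convex ℝ {X : Matrix ι ι ℝ | X.PosSemidef} :=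
  fun _ hX _ hY _ _ ha hb _ => (hX.smul ha).add (hY.smul hb)

variable {ι m : Type*} [Fintype ι] [Fintype m]

theorem frobenius_norm_sq_eq (A : Matrix m ι ℝ) :
    ‖A‖ ^ 2 = ∑ i, ‖(WithLp.toLp 2 (A i) : EuclideanSpace ℝ ι)‖ ^ 2 := by
  change ‖(WithLp.toLp 2 fun i => (WithLp.toLp 2 (A i) : EuclideanSpace ℝ ι))‖ ^ 2 = _
  rw [PiLp.norm_sq_eq_of_L2]

variable [DecidableEq ι]

theorem frobenius_norm_mul_le (A : Matrix m ι ℝ) (B : Matrix ι ι ℝ) :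
    ‖A * B‖ ≤ ‖A‖ * ‖toEuclideanCLM (𝕜 := ℝ) Bᵀ‖ := by
  have hrow (i : m) : (WithLp.toLp 2 ((A * B) i) : EuclideanSpace ℝ ι) =
      toEuclideanCLM (𝕜 := ℝ) Bᵀ (WithLp.toLp 2 (A i)) := by
    rw [toEuclideanCLM_toLp, mulVec_transpose]
    rfl
  rw [← pow_le_pow_iff_left₀ (norm_nonneg _) (by positivity) two_ne_zero, mul_pow,
    frobenius_norm_sq_eq, frobenius_norm_sq_eq, Finset.sum_mul]
  gcongr with i
  rw [hrow, mul_comm, ← mul_pow]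
  gcongr
  exact (toEuclideanCLM (𝕜 := ℝ) Bᵀ).le_opNorm _

theorem norm_toEuclideanCLM_apply_le (A : Matrix ι ι ℝ) (v : EuclideanSpace ℝ ι) :
    ‖toEuclideanCLM (𝕜 := ℝ) A v‖ ≤ ‖A‖ * ‖v‖ := by
  rw [← WithLp.toLp_ofLp 2 v, toEuclideanCLM_toLp, ← frobenius_norm_replicateCol (ι := Unit),
    ← frobenius_norm_replicateCol (ι := Unit), replicateCol_mulVec]
  exact frobenius_norm_mul _ _

theorem abs_inner_toEuclideanCLM_le (A : Matrix ι ι ℝ) (v : EuclideanSpace ℝ ι) :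
    |⟪v, toEuclideanCLM (𝕜 := ℝ) A v⟫| ≤ ‖A‖ * ‖v‖ ^ 2 :=
  calc |⟪v, toEuclideanCLM (𝕜 := ℝ) A v⟫| ≤ ‖v‖ * ‖toEuclideanCLM (𝕜 := ℝ) A v‖ :=
        abs_real_inner_le_norm _ _
    _ ≤ ‖v‖ * (‖A‖ * ‖v‖) := by gcongr; exact norm_toEuclideanCLM_apply_le A v
    _ = ‖A‖ * ‖v‖ ^ 2 := by ring

namespace PosSemidef

variable {A B : Matrix ι ι ℝ}

theorem inner_toEuclideanCLM_self_nonneg (hA : A.PosSemidef) (v : EuclideanSpace ℝ ι) :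
    0 ≤ ⟪v, toEuclideanCLM (𝕜 := ℝ) A v⟫ :=
  (isPositive_toEuclideanLin_iff.2 hA).inner_nonneg_right v

theorem toEuclideanCLM_apply_eq_zero_iff (hA : A.PosSemidef) (v : EuclideanSpace ℝ ι) :
    toEuclideanCLM (𝕜 := ℝ) A v = 0 ↔ ⟪v, toEuclideanCLM (𝕜 := ℝ) A v⟫ = 0 := by
  have := hA.dotProduct_mulVec_zero_iff v.ofLp
  rw [star_trivial] at this
  rw [inner_toEuclideanCLM, this, ← ofLp_toEuclideanCLM]
  exact (WithLp.ofLp_eq_zero (p := 2)).symm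

theorem ker_add_le_left (hA : A.PosSemidef) (hB : B.PosSemidef) :
    LinearMap.ker (A + B).toEuclideanLin ≤ LinearMap.ker A.toEuclideanLin := by
  intro v (hv : toEuclideanCLM (𝕜 := ℝ) (A + B) v = 0)
  have hAB : ⟪v, toEuclideanCLM (𝕜 := ℝ) A v⟫ + ⟪v, toEuclideanCLM (𝕜 := ℝ) B v⟫ = 0 := by
    rw [← inner_add_right, ← _root_.add_apply, ← map_add, hv, inner_zero_right]
  have hA0 := hA.inner_toEuclideanCLM_self_nonneg v
  have hB0 := hB.inner_toEuclideanCLM_self_nonneg v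
  exact (hA.toEuclideanCLM_apply_eq_zero_iff v).2 (by linarith)

end PosSemidef

theorem exists_mem_forall_ker_le {F : Set (Matrix ι ι ℝ)} (hF : Convex ℝ F)
    (hpsd : ∀ X ∈ F, X.PosSemidef) (hne : F.Nonempty) :
    ∃ x₀ ∈ F, ∀ y ∈ F, LinearMap.ker x₀.toEuclideanLin ≤ LinearMap.ker y.toEuclideanLin := by
  set dimKer : Matrix ι ι ℝ → ℕ := fun X => Module.finrank ℝ (LinearMap.ker X.toEuclideanLin)
  refine ⟨Function.argminOn dimKer F hne, Function.argminOn_mem _ _ _, fun y hy => ?_⟩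
  set x₀ := Function.argminOn dimKer F hne
  have hx₀ := Function.argminOn_mem dimKer F hne
  have hm : (1 / 2 : ℝ) • x₀ + (1 / 2 : ℝ) • y ∈ F :=
    hF hx₀ hy (by norm_num) (by norm_num) (by norm_num)
  have hker (A B : Matrix ι ι ℝ) (hA : A.PosSemidef) (hB : B.PosSemidef) :
      LinearMap.ker ((1 / 2 : ℝ) • A + (1 / 2 : ℝ) • B).toEuclideanLin ≤
        LinearMap.ker A.toEuclideanLin := by
    refine ((hA.smul (by norm_num)).ker_add_le_left (hB.smul (by norm_num))).trans_eq ?_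
    rw [map_smul, LinearMap.ker_smul _ _ (by norm_num)]
  -- the kernel of the midpoint is `ker x₀ ∩ ker y`, and it cannot be smaller than `ker x₀`
  have hmx₀ : LinearMap.ker ((1 / 2 : ℝ) • x₀ + (1 / 2 : ℝ) • y).toEuclideanLin =
      LinearMap.ker x₀.toEuclideanLin :=
    Submodule.eq_of_le_of_finrank_le (hker _ _ (hpsd _ hx₀) (hpsd _ hy))
      (Function.argminOn_le dimKer F hm)
  rw [← hmx₀, add_comm]
  exact hker _ _ (hpsd _ hy) (hpsd _ hx₀)

noncomputable def projMatrix (K : Submodule ℝ (EuclideanSpace ℝ ι)) : Matrix ι ι ℝ :=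
  (toEuclideanCLM (𝕜 := ℝ)).symm K.starProjection

section projMatrix

variable (K : Submodule ℝ (EuclideanSpace ℝ ι))

@[simp]
theorem toEuclideanCLM_projMatrix :
    toEuclideanCLM (𝕜 := ℝ) (projMatrix K) = K.starProjection :=
  StarAlgEquiv.apply_symm_apply _ _

theorem isHermitian_projMatrix : (projMatrix K).IsHermitian :=
  EquivLike.injective (toEuclideanCLM (𝕜 := ℝ)) <| by
    rw [← star_eq_conjTranspose, map_star, toEuclideanCLM_projMatrix]
    exact isSelfAdjoint_starProjection K

theorem transpose_projMatrix : (projMatrix K)ᵀ = projMatrix K := by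
  simpa only [IsHermitian, conjTranspose_eq_transpose_of_trivial] using isHermitian_projMatrix K

theorem projMatrix_mul_self : projMatrix K * projMatrix K = projMatrix K :=
  EquivLike.injective (toEuclideanCLM (𝕜 := ℝ)) <| by
    rw [map_mul, toEuclideanCLM_projMatrix]
    exact K.isIdempotentElem_starProjection

variable {K}

theorem mul_projMatrix_of_orthogonal_le_ker {X : Matrix ι ι ℝ}
    (h : Kᗮ ≤ LinearMap.ker X.toEuclideanLin) : X * projMatrix K = X :=
  EquivLike.injective (toEuclideanCLM (𝕜 := ℝ)) <| ContinuousLinearMap.ext fun v => by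
    have hv := h (K.sub_starProjection_mem_orthogonal v)
    rw [LinearMap.mem_ker, map_sub, sub_eq_zero] at hv
    rw [map_mul, mul_apply_eq_comp, toEuclideanCLM_projMatrix]
    exact hv.symm

theorem norm_mul_projMatrix_le (A : Matrix m ι ℝ) : ‖A * projMatrix K‖ ≤ ‖A‖ := by
  refine (frobenius_norm_mul_le A _).trans (mul_le_of_le_one_right (norm_nonneg _) ?_)
  rw [transpose_projMatrix, toEuclideanCLM_projMatrix]
  exact K.starProjection_norm_le

theorem norm_projMatrix_mul_mul_projMatrix_le (A : Matrix ι ι ℝ) :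
    ‖projMatrix K * A * projMatrix K‖ ≤ ‖A‖ := by
  refine (norm_mul_projMatrix_le _).trans ?_
  rw [← frobenius_norm_transpose, transpose_mul, transpose_projMatrix,
    ← frobenius_norm_transpose A]
  exact norm_mul_projMatrix_le _

end projMatrix

/-- The Hermitian matrices with range in `K`; these span the face of the PSD cone formed by the
PSD matrices with range in `K`. -/
def hermitianRangeIn (K : Submodule ℝ (EuclideanSpace ℝ ι)) : Submodule ℝ (Matrix ι ι ℝ) where
  carrier := {X | X.IsHermitian ∧ X * projMatrix K = X}
  add_mem' := fun ⟨hX, hXP⟩ ⟨hY, hYP⟩ => ⟨hX.add hY, by rw [add_mul, hXP, hYP]⟩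
  zero_mem' := ⟨isHermitian_zero, zero_mul _⟩
  smul_mem' := fun c _ ⟨hX, hXP⟩ => ⟨hX.smul (IsSelfAdjoint.all c), by rw [smul_mul_assoc, hXP]⟩

section hermitianRangeIn

variable {K : Submodule ℝ (EuclideanSpace ℝ ι)} {X : Matrix ι ι ℝ}

theorem projMatrix_mul_mul_projMatrix_of_mem (hX : X ∈ hermitianRangeIn K) :
    projMatrix K * X * projMatrix K = X := by
  have hPX : projMatrix K * X = X := by
    simpa only [conjTranspose_mul, hX.1.eq, (isHermitian_projMatrix K).eq] using
      congrArg conjTranspose hX.2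
  rw [hPX, hX.2]

theorem projMatrix_mul_mul_projMatrix_mem (hX : X.IsHermitian) :
    projMatrix K * X * projMatrix K ∈ hermitianRangeIn K :=
  ⟨by simpa only [(isHermitian_projMatrix K).eq] using
      isHermitian_mul_mul_conjTranspose (projMatrix K) hX,
    by rw [mul_assoc, projMatrix_mul_self]⟩

theorem inner_toEuclideanCLM_eq_of_mem (hX : X ∈ hermitianRangeIn K) (v : EuclideanSpace ℝ ι) :
    ⟪v, toEuclideanCLM (𝕜 := ℝ) X v⟫ =
      ⟪K.starProjection v, toEuclideanCLM (𝕜 := ℝ) X (K.starProjection v)⟫ := by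
  conv_lhs => rw [← projMatrix_mul_mul_projMatrix_of_mem hX]
  rw [map_mul, map_mul, mul_apply_eq_comp, mul_apply_eq_comp, toEuclideanCLM_projMatrix,
    ← K.inner_starProjection_left_eq_right]

end hermitianRangeIn

theorem PosSemidef.exists_closedBall_inter_subset {x₀ : Matrix ι ι ℝ} (hx₀ : x₀.PosSemidef) :
    ∃ δ > 0, closedBall x₀ δ ∩ hermitianRangeIn (LinearMap.ker x₀.toEuclideanLin)ᗮ ⊆
      {X | X.PosSemidef} := by
  set K := (LinearMap.ker x₀.toEuclideanLin)ᗮ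
  have hpos (u) (hu : u ∈ K) (hu0 : u ≠ 0) : 0 < ⟪u, toEuclideanCLM (𝕜 := ℝ) x₀ u⟫ := by
    refine (hx₀.inner_toEuclideanCLM_self_nonneg u).lt_of_ne' fun h => hu0 ?_
    have hker : u ∈ LinearMap.ker x₀.toEuclideanLin :=
      (hx₀.toEuclideanCLM_apply_eq_zero_iff u).2 h
    simpa using (Submodule.inf_orthogonal_eq_bot _).le ⟨hker, hu⟩
  obtain ⟨δ, hδ, hcoer⟩ := exists_pos_mul_norm_sq_le K (by fun_prop)
    (fun c u => by simp only [map_smul, real_inner_smul_left, real_inner_smul_right]; ring) hpos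
  refine ⟨δ, hδ, fun X ⟨hXδ, hXW⟩ => ?_⟩
  refine isPositive_toEuclideanLin_iff.1 <| (LinearMap.isPositive_iff _).2
    ⟨isSymmetric_toEuclideanLin_iff.2 hXW.1, fun v => ?_⟩
  rw [real_inner_comm]
  change 0 ≤ ⟪v, toEuclideanCLM (𝕜 := ℝ) X v⟫
  rw [inner_toEuclideanCLM_eq_of_mem hXW]
  set u := K.starProjection v
  have hsplit : ⟪u, toEuclideanCLM (𝕜 := ℝ) X u⟫ =
      ⟪u, toEuclideanCLM (𝕜 := ℝ) x₀ u⟫ + ⟪u, toEuclideanCLM (𝕜 := ℝ) (X - x₀) u⟫ := by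
    rw [← inner_add_right, ← _root_.add_apply, ← map_add, add_sub_cancel]
  have hXx₀ : ‖X - x₀‖ * ‖u‖ ^ 2 ≤ δ * ‖u‖ ^ 2 := by
    gcongr
    exact mem_closedBall_iff_norm.1 hXδ
  rw [hsplit]
  linarith [hcoer u (K.starProjection_apply_mem v),
    neg_abs_le ⟪u, toEuclideanCLM (𝕜 := ℝ) (X - x₀) u⟫, abs_inner_toEuclideanCLM_le (X - x₀) u]

end Matrix

open Matrix in
theorem amenableSet_psdCone_inter (n : ℕ) (V : AffineSubspace ℝ (Matrix (Fin n) (Fin n) ℝ)) :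
    AmenableSet (psdCone n ∩ V) := by
  intro F hF
  rcases F.eq_empty_or_nonempty with rfl | hne
  · exact fun _ _ => ⟨1, one_pos, by simp⟩
  have hFC := hF.2.2.1
  obtain ⟨x₀, hx₀F, hker⟩ := exists_mem_forall_ker_le hF.2.1 (fun X hX => (hFC hX).1) hne
  set K := (LinearMap.ker x₀.toEuclideanLin)ᗮ
  set W := hermitianRangeIn K
  obtain ⟨δ, hδ, hball⟩ := (hFC hx₀F).1.exists_closedBall_inter_subset
  have hFW : F ⊆ W := fun y hy => ⟨(hFC hy).1.isHermitian,
    mul_projMatrix_of_orthogonal_le_ker ((Submodule.orthogonal_orthogonal _).le.trans (hker y hy))⟩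
  have hFV : F ⊆ V := fun y hy => (hFC hy).2
  refine isAmenableFace_of_closedBall_inter_subset (G := psdCone n ∩ W) (W := W.toAffineSubspace)
    (convex_posSemidef.inter W.convex) Set.inter_subset_right hδ (fun X hX => ⟨hball hX, hX.2⟩)
    hx₀F hFW hFV ?_ ⟨x₀, hFC hx₀F⟩ ?_
  · rintro y ⟨⟨hy, hyW⟩, hyV⟩
    refine hF.mem_of_closedBall_inter_subset (W := W.toAffineSubspace ⊓ V) hx₀F
      ⟨hFW hx₀F, hFV hx₀F⟩ hδ ?_ ⟨hy, hyV⟩ ⟨hyW, hyV⟩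
    rintro X ⟨hXδ, hXW, hXV⟩
    exact ⟨hball ⟨hXδ, hXW⟩, hXV⟩
  · rintro x hx c ⟨hc, -⟩
    refine ⟨projMatrix K * c * projMatrix K,
      ⟨?_, projMatrix_mul_mul_projMatrix_mem hc.isHermitian⟩, ?_⟩
    · show PosSemidef _
      simpa only [(isHermitian_projMatrix K).eq] using hc.mul_mul_conjTranspose_same (projMatrix K)
    · rw [dist_eq_norm, dist_eq_norm]
      conv_lhs => rw [← projMatrix_mul_mul_projMatrix_of_mem hx]
      rw [← sub_mul, ← mul_sub]
      exact norm_projMatrix_mul_mul_projMatrix_le _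

theorem spectrahedral_amenable_general (n : ℕ) (V : AffineSubspace ℝ (Matrix (Fin n) (Fin n) ℝ))
    {E' : Type*} [NormedAddCommGroup E'] [InnerProductSpace ℝ E']
    (A : Matrix (Fin n) (Fin n) ℝ →ᵃ[ℝ] E') (hA : Function.Injective A) :
    AmenableSet (psdCone n ∩ (V : Set (Matrix (Fin n) (Fin n) ℝ))) ∧
    AmenableSet (A '' (psdCone n ∩ (V : Set (Matrix (Fin n) (Fin n) ℝ)))) :=
  ⟨amenableSet_psdCone_inter n V, (amenableSet_psdCone_inter n V).image A hA⟩

/-- Corollary 3.5(ii): spectrahedral sets are amenable. The intersection of the PSD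
cone with any affine subspace is amenable, and so is its image under any injective
affine map into another finite-dimensional space. -/
theorem spectrahedral_amenable (n : ℕ) (V : AffineSubspace ℝ (Matrix (Fin n) (Fin n) ℝ))
    {E' : Type*} [NormedAddCommGroup E'] [InnerProductSpace ℝ E'] [FiniteDimensional ℝ E']
    (A : Matrix (Fin n) (Fin n) ℝ →ᵃ[ℝ] E') (hA : Function.Injective A) :
    AmenableSet (psdCone n ∩ (V : Set (Matrix (Fin n) (Fin n) ℝ))) ∧
    AmenableSet (A '' (psdCone n ∩ (V : Set (Matrix (Fin n) (Fin n) ℝ)))) :=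
  spectrahedral_amenable_general n V A hA
end

section
/- (Transitivity of amenability) Let C ⊆ E be a closed convex set, and let F̂ and F be faces with F̂ ⊴ F ⊴ C, where F is an amenable face of C. Then F̂ is an amenable face of F if and only if F̂ is an amenable face of C. -/
open Metric Bornology

/-- Proposition 3.7(i) (transitivity): if `F̂ ⊴ F ⊴ C` and `F` is an amenable face of
`C`, then `F̂` is an amenable face of `F` iff it is an amenable face of `C`. -/
theorem amenable_face_transitive {E : Type*}
    [NormedAddCommGroup E] [InnerProductSpace ℝ E] [FiniteDimensional ℝ E]
    (C F Fhat : Set E) (hCcl : IsClosed C) (hCcv : Convex ℝ C)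
    (hF : IsFace C F) (hFhat : IsFace F Fhat)
    (hFam : IsAmenableFace C F) :
    IsAmenableFace F Fhat ↔ IsAmenableFace C Fhat := by
  rcases Fhat.eq_empty_or_nonempty with hFe | hFne
  · subst hFe
    have hvac : ((affineSpan ℝ (∅ : Set E) : Set E)) = ∅ := by
      simp [AffineSubspace.span_empty]
    constructor <;> intro _ B hB <;> exact ⟨1, one_pos, fun x hx => by
      rw [hvac] at hx; exact absurd hx.1 (Set.notMem_empty x)⟩
  · have hFsub : Fhat ⊆ F := hFhat.2.2.1
    have hFC : F ⊆ C := hF.2.2.1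
    have hFn : F.Nonempty := hFne.mono hFsub
    have hmono : ∀ x : E, infDist x C ≤ infDist x F := fun x =>
      infDist_le_infDist_of_subset hFC hFn
    constructor
    · intro h B hB
      obtain ⟨κ₁, hκ₁, h₁⟩ := h B hB
      obtain ⟨κ₂, hκ₂, h₂⟩ := hFam B hB
      refine ⟨κ₁ * κ₂, mul_pos hκ₁ hκ₂, fun x hx => ?_⟩
      have hspan : (affineSpan ℝ Fhat : Set E) ⊆ (affineSpan ℝ F : Set E) :=
        affineSpan_mono ℝ hFsub
      calc infDist x Fhat ≤ κ₁ * infDist x F := h₁ x hx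
        _ ≤ κ₁ * (κ₂ * infDist x C) := by
            exact mul_le_mul_of_nonneg_left (h₂ x ⟨hspan hx.1, hx.2⟩) hκ₁.le
        _ = κ₁ * κ₂ * infDist x C := by ring
    · intro h B hB
      obtain ⟨κ, hκ, h₁⟩ := h B hB
      refine ⟨κ, hκ, fun x hx => ?_⟩
      calc infDist x Fhat ≤ κ * infDist x C := h₁ x hx
        _ ≤ κ * infDist x F := mul_le_mul_of_nonneg_left (hmono x) hκ.le
end

section
/- (Inheritance of amenability) If C ⊆ E is an amenable closed convex set, then every face F ⊴ C is an amenable closed convex set in its own right (i.e., every face of F is an amenable face of F). -/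
open Metric Bornology

/-- Proposition 3.7(ii) (inheritance): every face of an amenable closed convex set is
itself an amenable convex set. -/
theorem amenable_face_inheritance {E : Type*}
    [NormedAddCommGroup E] [InnerProductSpace ℝ E] [FiniteDimensional ℝ E]
    (C F : Set E) (hCcl : IsClosed C) (hCcv : Convex ℝ C)
    (hC : AmenableSet C) (hF : IsFace C F) :
    AmenableSet F := by
  intro G hG B hB
  -- G is a face of C (transitivity of faces)
  have hGC : IsFace C G := by
    obtain ⟨hGcl, hGcv, hGF, hGface⟩ := hG
    obtain ⟨hFcl, hFcv, hFC, hFface⟩ := hF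
    refine ⟨hGcl, hGcv, hGF.trans hFC, ?_⟩
    intro x hx y hy α hα0 hα1 hmem
    have hxyF := hFface x hx y hy α hα0 hα1 (hGF hmem)
    exact hGface x hxyF.1 y hxyF.2 α hα0 hα1 hmem
  rcases G.eq_empty_or_nonempty with hGe | hGne
  · refine ⟨1, one_pos, ?_⟩
    intro x hx
    rw [hGe] at hx
    simp at hx
  · obtain ⟨κ, hκ, hκle⟩ := hC G hGC B hB
    refine ⟨κ, hκ, ?_⟩
    intro x hx
    have h1 := hκle x hx
    have hFne : F.Nonempty := hGne.mono hG.2.2.1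
    have h2 : infDist x C ≤ infDist x F :=
      infDist_le_infDist_of_subset hF.2.2.1 hFne
    calc infDist x G ≤ κ * infDist x C := h1
      _ ≤ κ * infDist x F := by
          exact mul_le_mul_of_nonneg_left h2 hκ.le
end

section
/- Let C be a non-empty compact convex subset of E contained in the hyperplane H = {x ∈ E : ⟨e, x⟩ = 1}, where e ∈ E is non-zero, and let K = {λu : λ ≥ 0, u ∈ C} be the cone generated by C. Then for every x ∈ H with x ∉ −K*, one has dist(x, C) ≤ ‖e‖·r·dist(x, K), where r = max{‖u‖ : u ∈ C}. -/
/-!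
Every `u ∈ C` lies in the hyperplane `⟪e, ·⟫ = 1`, so `x - u ⊥ e`. Let `t • u` be the orthogonal
projection of `x` onto `ℝ u`. Splitting `x - u = (x - t • u) + (t - 1) • u` orthogonally and
applying Bessel's inequality to `e` against the orthogonal pair `(x - t • u, u)` gives
`‖x - u‖ ≤ ‖e‖ ‖u‖ dist(x, ℝ u)`. Hence `dist(x, C) ≤ ‖e‖ r ‖x - l • u‖` for every `u ∈ C`
and every `l ∈ ℝ`, and taking the infimum over the points `l • u` of `K` proves the bound.
-/

open Metric Bornology RealInnerProductSpace

def dualCone' {E : Type*} [NormedAddCommGroup E] [InnerProductSpace ℝ E] (S : Set E) :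
    Set E := {y | ∀ x ∈ S, 0 ≤ ⟪y, x⟫}

lemma le_mul_infDist {α : Type*} [PseudoMetricSpace α] {x : α} {s : Set α} {a c : ℝ}
    (hs : s.Nonempty) (hc : 0 ≤ c) (h : ∀ y ∈ s, a ≤ c * dist x y) :
    a ≤ c * infDist x s := by
  have : Nonempty s := hs.to_subtype
  rw [infDist_eq_iInf, Real.mul_iInf_of_nonneg hc]
  exact le_ciInf fun y => h y y.2

section InnerProduct

variable {E : Type*} [NormedAddCommGroup E] [InnerProductSpace ℝ E]

lemma inner_sub_inner_div_norm_sq_smul_self (x v : E) (hv : v ≠ 0) :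
    ⟪x - (⟪x, v⟫ / ‖v‖ ^ 2) • v, v⟫ = 0 := by
  have hv2 : ‖v‖ ^ 2 ≠ 0 := by positivity
  rw [inner_sub_left, real_inner_smul_left, real_inner_self_eq_norm_sq, div_mul_cancel₀ _ hv2,
    sub_self]

lemma norm_sub_smul_sq_eq (x v : E) (hv : v ≠ 0) (s : ℝ) :
    ‖x - s • v‖ ^ 2 =
      ‖x - (⟪x, v⟫ / ‖v‖ ^ 2) • v‖ ^ 2 + (⟪x, v⟫ / ‖v‖ ^ 2 - s) ^ 2 * ‖v‖ ^ 2 := by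
  set t := ⟪x, v⟫ / ‖v‖ ^ 2
  have hdecomp : x - s • v = (x - t • v) + (t - s) • v := by module
  rw [hdecomp, norm_add_sq_real, real_inner_smul_right,
    inner_sub_inner_div_norm_sq_smul_self x v hv, norm_smul, mul_pow, Real.norm_eq_abs, sq_abs]
  ring

/-- Bessel's inequality for `e` against the orthogonal pair `a, v`, with denominators cleared. -/
lemma inner_sq_mul_add_inner_sq_mul_le (e a v : E) (hav : ⟪a, v⟫ = 0) :
    ⟪e, a⟫ ^ 2 * ‖v‖ ^ 2 + ⟪e, v⟫ ^ 2 * ‖a‖ ^ 2 ≤ ‖e‖ ^ 2 * ‖a‖ ^ 2 * ‖v‖ ^ 2 := by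
  rcases eq_or_ne v 0 with rfl | hv
  · simp
  set f := ‖v‖ ^ 2 • e - ⟪e, v⟫ • v
  have hfa : ⟪f, a⟫ = ‖v‖ ^ 2 * ⟪e, a⟫ := by
    rw [inner_sub_left, real_inner_smul_left, real_inner_smul_left, real_inner_comm a v, hav,
      mul_zero, sub_zero]
  have hff : ⟪f, f⟫ = ‖v‖ ^ 2 * (‖v‖ ^ 2 * ‖e‖ ^ 2 - ⟪e, v⟫ ^ 2) := by
    simp only [f, inner_sub_left, inner_sub_right, real_inner_smul_left, real_inner_smul_right]
    rw [real_inner_self_eq_norm_sq, real_inner_self_eq_norm_sq, real_inner_comm e v]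
    ring
  have hcs := real_inner_mul_inner_self_le f a
  rw [hfa, hff, real_inner_self_eq_norm_sq] at hcs
  have hv2 : 0 < ‖v‖ ^ 2 := by positivity
  nlinarith

lemma norm_sub_le_mul_norm_sub_smul {e x v : E} (hx : ⟪e, x⟫ = 1) (hv : ⟪e, v⟫ = 1) (s : ℝ) :
    ‖x - v‖ ≤ ‖e‖ * ‖v‖ * ‖x - s • v‖ := by
  have hv0 : v ≠ 0 := by rintro rfl; simp at hv
  have hsq := norm_sub_smul_sq_eq x v hv0
  set t := ⟪x, v⟫ / ‖v‖ ^ 2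
  set a := x - t • v
  have hea : ⟪e, a⟫ = 1 - t := by rw [inner_sub_right, real_inner_smul_right, hx, hv, mul_one]
  have hbessel :=
    inner_sq_mul_add_inner_sq_mul_le e a v (inner_sub_inner_div_norm_sq_smul_self x v hv0)
  rw [hea, hv, one_pow, one_mul] at hbessel
  have : ‖x - v‖ ^ 2 ≤ (‖e‖ * ‖v‖ * ‖x - s • v‖) ^ 2 :=
    calc ‖x - v‖ ^ 2 = ‖a‖ ^ 2 + (t - 1) ^ 2 * ‖v‖ ^ 2 := by simpa using hsq 1
      _ ≤ ‖e‖ ^ 2 * ‖v‖ ^ 2 * ‖a‖ ^ 2 := by nlinarith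
      _ ≤ ‖e‖ ^ 2 * ‖v‖ ^ 2 * (‖a‖ ^ 2 + (t - s) ^ 2 * ‖v‖ ^ 2) := by gcongr; nlinarith
      _ = (‖e‖ * ‖v‖ * ‖x - s • v‖) ^ 2 := by rw [mul_pow, mul_pow, hsq s]
  exact le_of_pow_le_pow_left₀ two_ne_zero (by positivity) this

end InnerProduct

theorem slice_distance_bound_general {E : Type*}
    [NormedAddCommGroup E] [InnerProductSpace ℝ E]
    (e : E) (C : Set E)
    (hCH : C ⊆ {x : E | ⟪e, x⟫ = 1})
    (K : Set E) (hK : K = {y : E | ∃ l : ℝ, 0 ≤ l ∧ ∃ u ∈ C, y = l • u})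
    (r : ℝ) (hr : IsGreatest ((fun u => ‖u‖) '' C) r) :
    ∀ x : E, ⟪e, x⟫ = 1 → x ∉ -dualCone' K →
      infDist x C ≤ ‖e‖ * r * infDist x K := by
  intro x hx _
  obtain ⟨⟨u₀, hu₀, rfl⟩, hr⟩ := hr
  have hKne : K.Nonempty := ⟨u₀, hK ▸ ⟨1, zero_le_one, u₀, hu₀, (one_smul ℝ u₀).symm⟩⟩
  refine le_mul_infDist hKne (by positivity) ?_
  rw [hK]
  rintro _ ⟨l, -, u, hu, rfl⟩
  calc infDist x C ≤ ‖x - u‖ := dist_eq_norm x u ▸ infDist_le_dist_of_mem hu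
    _ ≤ ‖e‖ * ‖u‖ * ‖x - l • u‖ := norm_sub_le_mul_norm_sub_smul hx (hCH hu) l
    _ ≤ ‖e‖ * ‖u₀‖ * dist x (l • u) := by
      rw [dist_eq_norm]
      gcongr
      exact hr ⟨u, hu, rfl⟩

/-- Proposition 4.2: if `C` is a compact convex subset of the hyperplane
`{x : ⟪e, x⟫ = 1}` generating the cone `K`, then for every `x` in the hyperplane with
`x ∉ -K*` one has `dist(x, C) ≤ ‖e‖ · r · dist(x, K)` where `r = max {‖u‖ : u ∈ C}`. -/
theorem slice_distance_bound {E : Type*}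
    [NormedAddCommGroup E] [InnerProductSpace ℝ E] [FiniteDimensional ℝ E]
    (e : E) (he : e ≠ 0) (C : Set E) (hCne : C.Nonempty)
    (hCcp : IsCompact C) (hCcv : Convex ℝ C)
    (hCH : C ⊆ {x : E | ⟪e, x⟫ = 1})
    (K : Set E) (hK : K = {y : E | ∃ l : ℝ, 0 ≤ l ∧ ∃ u ∈ C, y = l • u})
    (r : ℝ) (hr : IsGreatest ((fun u => ‖u‖) '' C) r) :
    ∀ x : E, ⟪e, x⟫ = 1 → x ∉ -dualCone' K →
      infDist x C ≤ ‖e‖ * r * infDist x K :=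
  slice_distance_bound_general e C hCH K hK r hr
end

section
/- Let K ⊆ E be a closed convex cone with dim(span K) > 1. Then there exists α > −1 such that for every x ∈ span(K) with ‖x‖ = 1, one has sup{⟨x, y⟩ : y ∈ K, ‖y‖ = 1} ≥ α. -/
open Metric Bornology RealInnerProductSpace

/-- Proposition 4.3: if `K` is a closed convex cone with `dim(span K) > 1`, then there
is `α > -1` such that for every unit vector `x ∈ span K`, the supremum of `⟪x, y⟫` over
unit vectors `y ∈ K` is at least `α`. -/
theorem cone_uniform_inner_bound {E : Type*}
    [NormedAddCommGroup E] [InnerProductSpace ℝ E] [FiniteDimensional ℝ E]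
    (K : Set E) (hKcl : IsClosed K) (hKcv : Convex ℝ K)
    (hKcone : ∀ c : ℝ, 0 ≤ c → ∀ x ∈ K, c • x ∈ K)
    (hdim : 1 < Module.finrank ℝ (Submodule.span ℝ K)) :
    ∃ α : ℝ, -1 < α ∧ ∀ x ∈ (Submodule.span ℝ K : Set E), ‖x‖ = 1 →
      α ≤ sSup {s : ℝ | ∃ y ∈ K, ‖y‖ = 1 ∧ s = ⟪x, y⟫} := by
  classical
  set V := Submodule.span ℝ K with hV
  -- a nonzero element of K
  obtain ⟨z, hzK, hz0⟩ : ∃ z ∈ K, z ≠ 0 := by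
    by_contra h
    push_neg at h
    have hsub : K ⊆ ({0} : Set E) := fun z hz => h z hz
    have : V ≤ Submodule.span ℝ ({0} : Set E) := Submodule.span_mono hsub
    simp only [Submodule.span_zero_singleton, le_bot_iff] at this
    rw [this] at hdim
    simp at hdim
  set y₀ : E := ‖z‖⁻¹ • z with hy₀
  have hy₀K : y₀ ∈ K := hKcone _ (by positivity) z hzK
  have hy₀n : ‖y₀‖ = 1 := by
    rw [hy₀, norm_smul, norm_inv, norm_norm, inv_mul_cancel₀ (norm_ne_zero_iff.2 hz0)]
  set T : E → Set ℝ := fun x => {s : ℝ | ∃ y ∈ K, ‖y‖ = 1 ∧ s = ⟪x, y⟫} with hT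
  have hTne : ∀ x, (T x).Nonempty := fun x => ⟨⟪x, y₀⟫, y₀, hy₀K, hy₀n, rfl⟩
  have hTbdd : ∀ x, BddAbove (T x) := by
    intro x
    refine ⟨‖x‖, ?_⟩
    rintro s ⟨y, hy, hyn, rfl⟩
    calc ⟪x, y⟫ ≤ ‖x‖ * ‖y‖ := real_inner_le_norm x y
    _ = ‖x‖ := by rw [hyn, mul_one]
  set f : E → ℝ := fun x => sSup (T x) with hf
  have hf_mem_le : ∀ x, ∀ y ∈ K, ‖y‖ = 1 → ⟪x, y⟫ ≤ f x :=
    fun x y hy hyn => le_csSup (hTbdd x) ⟨y, hy, hyn, rfl⟩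
  have hflip : ∀ x x' : E, f x ≤ f x' + dist x x' := by
    intro x x'
    apply csSup_le (hTne x)
    rintro s ⟨y, hy, hyn, rfl⟩
    have h1 : ⟪x, y⟫ = ⟪x', y⟫ + ⟪x - x', y⟫ := by
      rw [inner_sub_left]; ring
    have h2 : ⟪x - x', y⟫ ≤ dist x x' := by
      calc ⟪x - x', y⟫ ≤ ‖x - x'‖ * ‖y‖ := real_inner_le_norm _ _
      _ = dist x x' := by rw [hyn, mul_one, dist_eq_norm]
    have := hf_mem_le x' y hy hyn
    linarith
  have hcont : Continuous f := (LipschitzWith.of_le_add hflip).continuous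
  -- the compact set of unit vectors of V
  set S : Set E := sphere (0 : E) 1 ∩ (V : Set E) with hS
  have hScpt : IsCompact S :=
    (isCompact_sphere (0 : E) 1).inter_right V.closed_of_finiteDimensional
  have hy₀S : y₀ ∈ S := ⟨by simpa [mem_sphere_iff_norm] using hy₀n, Submodule.subset_span hy₀K⟩
  obtain ⟨x₀, hx₀S, hmin⟩ := hScpt.exists_isMinOn ⟨y₀, hy₀S⟩ hcont.continuousOn
  -- pointwise strict bound
  have hgt : ∀ x ∈ S, -1 < f x := by
    intro x hxS
    by_contra h
    push_neg at h
    have hxn : ‖x‖ = 1 := by simpa [mem_sphere_iff_norm] using hxS.1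
    -- every unit vector of K equals -x
    have huniq : ∀ y ∈ K, ‖y‖ = 1 → y = -x := by
      intro y hy hyn
      have h1 : ⟪x, y⟫ ≤ -1 := le_trans (hf_mem_le x y hy hyn) h
      have h2 : -1 ≤ ⟪x, y⟫ := by
        have := abs_real_inner_le_norm x y
        rw [hxn, hyn, one_mul] at this
        have := abs_le.1 this
        linarith [this.1]
      have heq : ⟪x, y⟫ = -1 := le_antisymm h1 h2
      have hsum : ‖x + y‖ ^ 2 = 0 := by
        rw [norm_add_sq_real, hxn, hyn, heq]; ring
      have hxy : x + y = 0 := by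
        have := pow_eq_zero_iff (n := 2) (by norm_num) |>.1 hsum
        exact norm_eq_zero.1 this
      exact eq_neg_of_add_eq_zero_left (by rw [add_comm]; exact hxy)
    -- hence K ⊆ span {x}, contradicting the dimension assumption
    have hKsub : K ⊆ (Submodule.span ℝ ({x} : Set E) : Set E) := by
      intro w hw
      rcases eq_or_ne w 0 with rfl | hw0
      · exact Submodule.zero_mem _
      · have hwK : ‖w‖⁻¹ • w ∈ K := hKcone _ (by positivity) w hw
        have hwn : ‖‖w‖⁻¹ • w‖ = 1 := by
          rw [norm_smul, norm_inv, norm_norm, inv_mul_cancel₀ (norm_ne_zero_iff.2 hw0)]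
        have hu := huniq _ hwK hwn
        have hwe : (-‖w‖) • x = w := by
          rw [neg_smul, ← smul_neg, ← hu, smul_smul,
            mul_inv_cancel₀ (norm_ne_zero_iff.2 hw0), one_smul]
        exact Submodule.mem_span_singleton.2 ⟨-‖w‖, hwe⟩
    have hle : V ≤ Submodule.span ℝ ({x} : Set E) := Submodule.span_le.2 hKsub
    have hx0 : x ≠ 0 := by
      intro hx0; rw [hx0, norm_zero] at hxn; norm_num at hxn
    have h1 : Module.finrank ℝ V ≤ Module.finrank ℝ (Submodule.span ℝ ({x} : Set E)) :=
      Submodule.finrank_mono hle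
    rw [finrank_span_singleton hx0] at h1
    omega
  exact ⟨f x₀, hgt x₀ hx₀S, fun x hx hxn =>
    hmin ⟨by simpa [mem_sphere_iff_norm] using hxn, hx⟩⟩
end

section
/- Let K ⊆ E be a pointed closed convex cone (K ∩ (−K) = {0}). Then for every face F ⊴ K with dim(span F) > 1 there exists β > 0 such that for every x ∈ span(F) and every y ∈ F with ‖y‖ = 1 satisfying ⟨x, y⟩ = sup{⟨x, u⟩ : u ∈ F, ‖u‖ = 1}, one has dist(x + t·y, K) ≤ dist(x, K) and dist(x, F) ≤ β·dist(x + t·y, F) for all t ≥ 0. -/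
set_option maxHeartbeats 1000000

open Metric Bornology RealInnerProductSpace

section Aux

variable {E : Type*} [NormedAddCommGroup E] [InnerProductSpace ℝ E] [FiniteDimensional ℝ E]

/-- Lower bound on the distance to a set via a unit vector in its polar. -/
private lemma aux_dual_le (F : Set E) (hFne : F.Nonempty) (z v : E) (hv : ‖v‖ = 1)
    (hvF : ∀ u ∈ F, ⟪v, u⟫ ≤ 0) : ⟪z, v⟫ ≤ infDist z F := by
  rw [infDist_eq_iInf]
  have : Nonempty ↥F := hFne.to_subtype
  refine le_ciInf fun f => ?_
  calc ⟪z, v⟫ = ⟪z - (f:E), v⟫ + ⟪(f:E), v⟫ := by rw [inner_sub_left]; ring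
    _ ≤ ‖z - (f:E)‖ * ‖v‖ + 0 := by
        refine add_le_add (real_inner_le_norm _ _) ?_
        rw [real_inner_comm]; exact hvF f f.2
    _ = dist z f := by rw [hv, dist_eq_norm]; ring

/-- Variational inequality for a nearest point of a convex set. -/
private lemma aux_var (F : Set E) (hFcv : Convex ℝ F) (x p : E) (hpF : p ∈ F)
    (hmin : ∀ f ∈ F, dist x p ≤ dist x f) :
    ∀ f ∈ F, ⟪x - p, f - p⟫ ≤ 0 := by
  intro f hf
  by_contra hlt
  push_neg at hlt
  set a := x - p with ha
  set b := f - p with hb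
  have hb0 : b ≠ 0 := by
    rintro h
    rw [h, inner_zero_right] at hlt; exact lt_irrefl _ hlt
  have hbpos : (0:ℝ) < ‖b‖ ^ 2 := by have := norm_pos_iff.mpr hb0; positivity
  set θ : ℝ := min 1 (⟪a, b⟫ / ‖b‖ ^ 2) with hθ
  have hθpos : 0 < θ := lt_min one_pos (div_pos hlt hbpos)
  have hθ1 : θ ≤ 1 := min_le_left _ _
  have hθle : θ * ‖b‖ ^ 2 ≤ ⟪a, b⟫ := by
    have := min_le_right 1 (⟪a, b⟫ / ‖b‖ ^ 2)
    calc θ * ‖b‖ ^ 2 ≤ (⟪a, b⟫ / ‖b‖ ^ 2) * ‖b‖ ^ 2 :=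
          mul_le_mul_of_nonneg_right this hbpos.le
      _ = ⟪a, b⟫ := by field_simp
  have hf' : p + θ • b ∈ F := by
    have := hFcv hpF hf (by linarith : (0:ℝ) ≤ 1 - θ) hθpos.le (by ring)
    have h2 : (1 - θ) • p + θ • f = p + θ • (f - p) := by module
    rw [h2] at this; exact this
  have hd := hmin _ hf'
  rw [dist_eq_norm, dist_eq_norm] at hd
  have hxa : x - (p + θ • b) = a - θ • b := by rw [ha]; abel
  rw [hxa] at hd
  have hsq : ‖a‖ ^ 2 ≤ ‖a - θ • b‖ ^ 2 := by
    have := norm_nonneg a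
    nlinarith [hd]
  have hexp : ‖a - θ • b‖ ^ 2 = ‖a‖ ^ 2 - 2 * (θ * ⟪a, b⟫) + θ ^ 2 * ‖b‖ ^ 2 := by
    rw [norm_sub_sq_real, real_inner_smul_right, norm_smul]
    rw [mul_pow]
    simp [abs_of_pos hθpos]
  nlinarith [hexp, hsq, hθle, hθpos, hlt]

/-- Compactness constant: a uniform lower bound on `‖x - ⟪x,y⟫•y‖` over polar unit
vectors `x` and unit maximisers `y`. -/
private lemma aux_key (F : Set E) (hFcl : IsClosed F)
    (hcone : ∀ c : ℝ, 0 ≤ c → ∀ f ∈ F, c • f ∈ F)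
    (hdim : 1 < Module.finrank ℝ (Submodule.span ℝ F)) :
    ∃ c > (0:ℝ), ∀ x y : E, ‖x‖ = 1 → ‖y‖ = 1 → y ∈ F →
      (∀ u ∈ F, ⟪x, u⟫ ≤ 0) → (∀ u ∈ F, ‖u‖ = 1 → ⟪x, u⟫ ≤ ⟪x, y⟫) →
      c ≤ ‖x - ⟪x, y⟫ • y‖ := by
  classical
  set C : Set (E × E) := {q | ‖q.1‖ = 1} ∩ {q | ‖q.2‖ = 1} ∩ {q | q.2 ∈ F} ∩
    (⋂ u ∈ F, {q | ⟪q.1, u⟫ ≤ 0}) ∩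
    (⋂ u ∈ {u | u ∈ F ∧ ‖u‖ = 1}, {q : E × E | ⟪q.1, u⟫ ≤ ⟪q.1, q.2⟫}) with hC
  have hc1 : IsClosed {q : E × E | ‖q.1‖ = 1} := isClosed_eq continuous_fst.norm continuous_const
  have hc2 : IsClosed {q : E × E | ‖q.2‖ = 1} := isClosed_eq continuous_snd.norm continuous_const
  have hc3 : IsClosed {q : E × E | q.2 ∈ F} := hFcl.preimage continuous_snd
  have hc4 : IsClosed (⋂ u ∈ F, {q : E × E | ⟪q.1, u⟫ ≤ 0}) :=
    isClosed_biInter fun u _ =>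
      isClosed_le (Continuous.inner continuous_fst continuous_const) continuous_const
  have hc5 : IsClosed (⋂ u ∈ {u : E | u ∈ F ∧ ‖u‖ = 1}, {q : E × E | ⟪q.1, u⟫ ≤ ⟪q.1, q.2⟫}) :=
    isClosed_biInter fun u _ =>
      isClosed_le (Continuous.inner continuous_fst continuous_const)
        (Continuous.inner continuous_fst continuous_snd)
  have hCcl : IsClosed C := (((hc1.inter hc2).inter hc3).inter hc4).inter hc5
  have hCsub : C ⊆ sphere (0:E) 1 ×ˢ sphere (0:E) 1 := by
    rintro ⟨x, y⟩ ⟨⟨⟨⟨h1, h2⟩, -⟩, -⟩, -⟩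
    exact ⟨mem_sphere_zero_iff_norm.mpr h1, mem_sphere_zero_iff_norm.mpr h2⟩
  have hCcp : IsCompact C :=
    IsCompact.of_isClosed_subset ((isCompact_sphere 0 1).prod (isCompact_sphere 0 1)) hCcl hCsub
  have hg : Continuous fun q : E × E => ‖q.1 - ⟪q.1, q.2⟫ • q.2‖ :=
    (continuous_fst.sub ((continuous_fst.inner continuous_snd).smul continuous_snd)).norm
  have hmemC : ∀ x y : E, ‖x‖ = 1 → ‖y‖ = 1 → y ∈ F → (∀ u ∈ F, ⟪x, u⟫ ≤ 0) →
      (∀ u ∈ F, ‖u‖ = 1 → ⟪x, u⟫ ≤ ⟪x, y⟫) → (x, y) ∈ C := by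
    intro x y h1 h2 h3 h4 h5
    refine ⟨⟨⟨⟨h1, h2⟩, h3⟩, ?_⟩, ?_⟩
    · exact Set.mem_biInter fun u hu => h4 u hu
    · exact Set.mem_biInter fun u hu => h5 u hu.1 hu.2
  by_cases hCne : C.Nonempty
  · obtain ⟨q₀, hq₀C, hq₀min⟩ := hCcp.exists_isMinOn hCne hg.continuousOn
    obtain ⟨⟨⟨⟨h1, h2⟩, h3⟩, h4⟩, h5⟩ := hq₀C
    have h4' : ∀ u ∈ F, ⟪q₀.1, u⟫ ≤ 0 := by
      intro u hu; exact Set.mem_iInter₂.mp h4 u hu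
    have h5' : ∀ u ∈ F, ‖u‖ = 1 → ⟪q₀.1, u⟫ ≤ ⟪q₀.1, q₀.2⟫ := by
      intro u hu hu1; exact Set.mem_iInter₂.mp h5 u ⟨hu, hu1⟩
    refine ⟨‖q₀.1 - ⟪q₀.1, q₀.2⟫ • q₀.2‖, ?_, ?_⟩
    · rcases (norm_nonneg (q₀.1 - ⟪q₀.1, q₀.2⟫ • q₀.2)).lt_or_eq with h | h
      · exact h
      exfalso
      have hx0 : q₀.1 = ⟪q₀.1, q₀.2⟫ • q₀.2 :=
        sub_eq_zero.mp (norm_eq_zero.mp h.symm)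
      set η : ℝ := ⟪q₀.1, q₀.2⟫ with hη
      have h1' : ‖q₀.1‖ = 1 := h1
      have h2' : ‖q₀.2‖ = 1 := h2
      have habs : |η| = 1 := by
        have : ‖q₀.1‖ = |η| * ‖q₀.2‖ := by rw [hx0, norm_smul]; rfl
        rw [h1', h2', mul_one] at this; exact this.symm
      have hneg : η ≤ 0 := h4' q₀.2 h3
      have hηm1 : η = -1 := by
        rcases abs_eq (by norm_num : (0:ℝ) ≤ 1) |>.mp habs with h' | h'
        · linarith
        · exact h'
      have hxy : q₀.1 = -q₀.2 := by rw [hx0, hηm1]; simp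
      have hy0 : q₀.2 ≠ 0 := by
        intro h'; rw [h', norm_zero] at h2'; norm_num at h2'
      have hsub : F ⊆ (Submodule.span ℝ {q₀.2} : Submodule ℝ E) := by
        intro f hf
        rcases eq_or_ne f 0 with rfl | hf0
        · exact Submodule.zero_mem _
        · have hnf : (0:ℝ) < ‖f‖ := norm_pos_iff.mpr hf0
          set u : E := ‖f‖⁻¹ • f with hu
          have huF : u ∈ F := hcone _ (by positivity) f hf
          have hu1 : ‖u‖ = 1 := by
            rw [hu, norm_smul, norm_inv, norm_norm, inv_mul_cancel₀ hnf.ne']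
          have hle := h5' u huF hu1
          rw [hηm1, hxy] at hle
          have hge : (1:ℝ) ≤ ⟪q₀.2, u⟫ := by
            have : ⟪-q₀.2, u⟫ = -⟪q₀.2, u⟫ := by rw [inner_neg_left]
            rw [this] at hle; linarith
          have hcs : ⟪q₀.2, u⟫ ≤ ‖q₀.2‖ * ‖u‖ := real_inner_le_norm _ _
          rw [h2', hu1, one_mul] at hcs
          have heq : ⟪q₀.2, u⟫ = ‖q₀.2‖ * ‖u‖ := by rw [h2', hu1]; nlinarith
          have := inner_eq_norm_mul_iff_real.mp heq
          rw [h2', hu1, one_smul, one_smul] at this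
          have hfu : f = ‖f‖ • u := by
            rw [hu, smul_smul, mul_inv_cancel₀ hnf.ne', one_smul]
          rw [hfu, this]
          exact Submodule.smul_mem _ _ (Submodule.mem_span_singleton_self _)
      have hle : Submodule.span ℝ F ≤ Submodule.span ℝ {q₀.2} :=
        Submodule.span_le.mpr hsub
      have hfr := Submodule.finrank_mono hle
      rw [finrank_span_singleton hy0] at hfr
      omega
    · intro x y hx hy hyF hpol hmax
      exact hq₀min (hmemC x y hx hy hyF hpol hmax)
  · refine ⟨1, one_pos, fun x y hx hy hyF hpol hmax => ?_⟩
    exact absurd ⟨(x, y), hmemC x y hx hy hyF hpol hmax⟩ hCne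

end Aux

/-- Proposition 4.4: in a pointed closed convex cone `K`, for every face `F` with
`dim(span F) > 1` there is `β > 0` such that, for every `x ∈ span F` and every unit
vector `y ∈ F` maximising `⟪x, ·⟫` over unit vectors of `F`, one has
`dist(x + t·y, K) ≤ dist(x, K)` and `dist(x, F) ≤ β · dist(x + t·y, F)` for all
`t ≥ 0`. -/
theorem cone_face_shift_bound {E : Type*}
    [NormedAddCommGroup E] [InnerProductSpace ℝ E] [FiniteDimensional ℝ E]
    (K : Set E) (hKcl : IsClosed K) (hKcv : Convex ℝ K)
    (hKcone : ∀ c : ℝ, 0 ≤ c → ∀ x ∈ K, c • x ∈ K)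
    (hpointed : K ∩ (-K) = {0})
    (F : Set E) (hF : IsFace K F)
    (hdim : 1 < Module.finrank ℝ (Submodule.span ℝ F)) :
    ∃ β > (0:ℝ), ∀ x ∈ (Submodule.span ℝ F : Set E), ∀ y ∈ F, ‖y‖ = 1 →
      (∀ u ∈ F, ‖u‖ = 1 → ⟪x, u⟫ ≤ ⟪x, y⟫) →
      ∀ t : ℝ, 0 ≤ t →
        infDist (x + t • y) K ≤ infDist x K ∧
        infDist x F ≤ β * infDist (x + t • y) F := by
  obtain ⟨hFcl, hFcv, hFK, hface⟩ := hF
  -- F is nonempty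
  have hFne : F.Nonempty := by
    by_contra h
    rw [Set.not_nonempty_iff_eq_empty] at h
    rw [h, Submodule.span_empty] at hdim
    simp at hdim
  obtain ⟨a, haF⟩ := hFne
  have h0K : (0:E) ∈ K := by
    have := hKcone 0 le_rfl a (hFK haF)
    rwa [zero_smul] at this
  have h0F : (0:E) ∈ F := by
    have h2a : (2:ℝ) • a ∈ K := hKcone 2 (by norm_num) a (hFK haF)
    have hmem : (1/2 : ℝ) • ((2:ℝ) • a) + (1 - 1/2 : ℝ) • (0:E) ∈ F := by
      rw [smul_smul]
      norm_num
      exact haF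
    exact (hface _ h2a _ h0K (1/2) (by norm_num) (by norm_num) hmem).2
  have hFne : F.Nonempty := ⟨0, h0F⟩
  -- F is a cone
  have hcone : ∀ c : ℝ, 0 ≤ c → ∀ f ∈ F, c • f ∈ F := by
    intro c hc f hf
    rcases le_or_gt c 1 with hc1 | hc1
    · have := hFcv hf h0F hc (by linarith : (0:ℝ) ≤ 1 - c) (by ring)
      rwa [smul_zero, add_zero] at this
    · have hcfK : c • f ∈ K := hKcone c hc f (hFK hf)
      have hα : (0:ℝ) < 1/c := by positivity
      have hα1 : 1/c < 1 := by
        rw [div_lt_one (by linarith)]; linarith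
      have hmem : (1/c : ℝ) • (c • f) + (1 - 1/c : ℝ) • (0:E) ∈ F := by
        rw [smul_smul, smul_zero, add_zero]
        have : (1/c) * c = 1 := by field_simp
        rw [this, one_smul]
        exact hf
      exact (hface _ hcfK _ h0K (1/c) hα hα1 hmem).1
  -- the uniform constant
  obtain ⟨c, hc0, hkey⟩ := aux_key F hFcl hcone hdim
  refine ⟨max 1 c⁻¹, lt_of_lt_of_le one_pos (le_max_left _ _), ?_⟩
  intro x hx y hyF hy1 hmax t ht
  set β : ℝ := max 1 c⁻¹ with hβ
  have hβ1 : (1:ℝ) ≤ β := le_max_left _ _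
  set z := x + t • y with hz
  constructor
  · -- distance to K does not increase
    obtain ⟨k₀, hk₀K, hk₀d⟩ := hKcl.exists_infDist_eq_dist ⟨0, h0K⟩ x
    have htyK : t • y ∈ K := hKcone t ht y (hFK hyF)
    have hsum : k₀ + t • y ∈ K := by
      have hmid : (1/2 : ℝ) • k₀ + (1/2 : ℝ) • (t • y) ∈ K :=
        hKcv hk₀K htyK (by norm_num) (by norm_num) (by norm_num)
      have := hKcone 2 (by norm_num) _ hmid
      rw [smul_add, smul_smul, smul_smul] at this
      norm_num at this
      exact this
    calc infDist z K ≤ dist z (k₀ + t • y) := infDist_le_dist_of_mem hsum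
      _ = dist x k₀ := by
          simp only [hz]
          rw [dist_eq_norm, dist_eq_norm]
          congr 1
          abel
      _ = infDist x K := hk₀d.symm
  · -- distance to F bound
    obtain ⟨p, hpF, hpd⟩ := hFcl.exists_infDist_eq_dist hFne x
    have hmin : ∀ f ∈ F, dist x p ≤ dist x f := by
      intro f hf
      rw [← hpd]
      exact infDist_le_dist_of_mem hf
    have hvar := aux_var F hFcv x p hpF hmin
    set r := x - p with hr
    have hrF : ∀ u ∈ F, ⟪r, u⟫ ≤ 0 := by
      intro u hu
      have hpu : p + u ∈ F := by
        have hmid : (1/2 : ℝ) • p + (1/2 : ℝ) • u ∈ F :=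
          hFcv hpF hu (by norm_num) (by norm_num) (by norm_num)
        have := hcone 2 (by norm_num) _ hmid
        rw [smul_add, smul_smul, smul_smul] at this
        norm_num at this
        exact this
      have := hvar (p + u) hpu
      rwa [add_sub_cancel_left] at this
    have hrp : ⟪r, p⟫ = 0 := by
      have h1 := hvar 0 h0F
      rw [zero_sub, inner_neg_right] at h1
      have h2 : (2:ℝ) • p ∈ F := hcone 2 (by norm_num) p hpF
      have h3 := hvar _ h2
      have h4 : (2:ℝ) • p - p = p := by
        rw [two_smul]; abel
      rw [h4] at h3
      linarith
    have hdF0 : infDist x F = ‖r‖ := by rw [hpd, dist_eq_norm]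
    by_cases hr0 : r = 0
    · rw [hdF0, hr0, norm_zero]
      have hβ0 : (0:ℝ) ≤ β := le_trans zero_le_one hβ1
      exact mul_nonneg hβ0 infDist_nonneg
    · have hrn : (0:ℝ) < ‖r‖ := norm_pos_iff.mpr hr0
      by_cases hp0 : p = 0
      · -- projection is zero: use the compactness constant
        have hxr : x = r := by rw [hr, hp0, sub_zero]
        have hx0 : x ≠ 0 := by rw [hxr]; exact hr0
        have hxn : (0:ℝ) < ‖x‖ := norm_pos_iff.mpr hx0
        have hxF : ∀ u ∈ F, ⟪x, u⟫ ≤ 0 := by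
          intro u hu; rw [hxr]; exact hrF u hu
        set η : ℝ := ⟪x, y⟫ with hη
        have hη0 : η ≤ 0 := hxF y hyF
        set w : E := x - η • y with hw
        -- lower bound on ‖w‖
        have hnx1 : ‖‖x‖⁻¹ • x‖ = 1 := by
          rw [norm_smul, norm_inv, norm_norm, inv_mul_cancel₀ hxn.ne']
        have hkx := hkey (‖x‖⁻¹ • x) y hnx1 hy1 hyF
          (fun u hu => by
            rw [real_inner_smul_left]
            exact mul_nonpos_of_nonneg_of_nonpos (by positivity) (hxF u hu))
          (fun u hu hu1 => by
            rw [real_inner_smul_left, real_inner_smul_left]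
            exact mul_le_mul_of_nonneg_left (hmax u hu hu1) (by positivity))
        have hsimp : ‖x‖⁻¹ • x - ⟪‖x‖⁻¹ • x, y⟫ • y = ‖x‖⁻¹ • w := by
          rw [real_inner_smul_left, hw, smul_sub, ← hη, smul_smul]
        rw [hsimp, norm_smul, norm_inv, norm_norm] at hkx
        have hwlow : c * ‖x‖ ≤ ‖w‖ := by
          calc c * ‖x‖ ≤ (‖x‖⁻¹ * ‖w‖) * ‖x‖ := mul_le_mul_of_nonneg_right hkx hxn.le
            _ = ‖w‖ := by field_simp
        have hw0 : w ≠ 0 := by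
          intro h
          rw [h, norm_zero] at hwlow
          nlinarith
        have hwn : (0:ℝ) < ‖w‖ := norm_pos_iff.mpr hw0
        have hwy : ⟪w, y⟫ = 0 := by
          rw [hw, inner_sub_left, real_inner_smul_left, real_inner_self_eq_norm_mul_norm,
            hy1, mul_one, mul_one, ← hη, sub_self]
        have hwF : ∀ u ∈ F, ⟪w, u⟫ ≤ 0 := by
          intro u hu
          rcases eq_or_ne u 0 with rfl | hu0
          · rw [inner_zero_right]
          · have hun : (0:ℝ) < ‖u‖ := norm_pos_iff.mpr hu0
            have huF' : ‖u‖⁻¹ • u ∈ F := hcone _ (by positivity) u hu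
            have hun1 : ‖‖u‖⁻¹ • u‖ = 1 := by
              rw [norm_smul, norm_inv, norm_norm, inv_mul_cancel₀ hun.ne']
            have h1 := hmax _ huF' hun1
            rw [real_inner_smul_right] at h1
            have h2 : ⟪x, u⟫ ≤ η * ‖u‖ := by
              have h1' := mul_le_mul_of_nonneg_left h1 hun.le
              rw [← mul_assoc, mul_inv_cancel₀ hun.ne', one_mul] at h1'
              linarith [h1']
            have h3 : ⟪y, u⟫ ≤ ‖u‖ := by
              have := real_inner_le_norm y u
              rwa [hy1, one_mul] at this
            have h4 : η * ‖u‖ ≤ η * ⟪y, u⟫ := mul_le_mul_of_nonpos_left h3 hη0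
            rw [hw, inner_sub_left, real_inner_smul_left]
            linarith
        -- dual bound
        have hwy' : ⟪y, w⟫ = 0 := by rw [real_inner_comm]; exact hwy
        have hzw : ⟪z, ‖w‖⁻¹ • w⟫ = ‖w‖ := by
          rw [real_inner_smul_right, hz, inner_add_left, real_inner_smul_left]
          have hxw : ⟪x, w⟫ = ‖w‖ * ‖w‖ := by
            have hxwe : x = w + η • y := by rw [hw]; abel
            rw [hxwe, inner_add_left, real_inner_smul_left, hwy',
              mul_zero, add_zero, real_inner_self_eq_norm_mul_norm]
          rw [hxw, hwy', mul_zero, add_zero]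
          field_simp
        have hwun : ‖‖w‖⁻¹ • w‖ = 1 := by
          rw [norm_smul, norm_inv, norm_norm, inv_mul_cancel₀ hwn.ne']
        have hwuF : ∀ u ∈ F, ⟪‖w‖⁻¹ • w, u⟫ ≤ 0 := by
          intro u hu
          rw [real_inner_smul_left]
          exact mul_nonpos_of_nonneg_of_nonpos (by positivity) (hwF u hu)
        have hdz := aux_dual_le F hFne z _ hwun hwuF
        rw [hzw] at hdz
        -- conclude
        have hdx : infDist x F = ‖x‖ := by rw [hdF0, hxr]
        rw [hdx]
        have h1 : ‖x‖ ≤ c⁻¹ * infDist z F := by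
          calc ‖x‖ = c⁻¹ * (c * ‖x‖) := by field_simp
            _ ≤ c⁻¹ * infDist z F :=
                mul_le_mul_of_nonneg_left (le_trans hwlow hdz) (by positivity)
        calc ‖x‖ ≤ c⁻¹ * infDist z F := h1
          _ ≤ β * infDist z F := by
              apply mul_le_mul_of_nonneg_right (le_max_right _ _) infDist_nonneg
      · -- projection nonzero: β = 1 works
        have hpn : (0:ℝ) < ‖p‖ := norm_pos_iff.mpr hp0
        have hry : ⟪r, y⟫ = 0 := by
          have hle : ⟪r, y⟫ ≤ 0 := hrF y hyF
          have hupF : ‖p‖⁻¹ • p ∈ F := hcone _ (by positivity) p hpF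
          have hup1 : ‖‖p‖⁻¹ • p‖ = 1 := by
            rw [norm_smul, norm_inv, norm_norm, inv_mul_cancel₀ hpn.ne']
          have h1 := hmax _ hupF hup1
          rw [real_inner_smul_right] at h1
          have hxp : ⟪x, p⟫ = ‖p‖ * ‖p‖ := by
            have : x = p + r := by rw [hr]; abel
            rw [this, inner_add_left, real_inner_self_eq_norm_mul_norm, hrp, add_zero]
          rw [hxp] at h1
          have h1' : ‖p‖ ≤ ⟪x, y⟫ := by
            have : ‖p‖⁻¹ * (‖p‖ * ‖p‖) = ‖p‖ := by field_simp
            rwa [this] at h1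
          have h2 : ⟪p, y⟫ ≤ ‖p‖ := by
            have := real_inner_le_norm p y
            rwa [hy1, mul_one] at this
          have h3 : ⟪x, y⟫ = ⟪p, y⟫ + ⟪r, y⟫ := by
            have : x = p + r := by rw [hr]; abel
            rw [this, inner_add_left]
          linarith
        have hrun : ‖‖r‖⁻¹ • r‖ = 1 := by
          rw [norm_smul, norm_inv, norm_norm, inv_mul_cancel₀ hrn.ne']
        have hruF : ∀ u ∈ F, ⟪‖r‖⁻¹ • r, u⟫ ≤ 0 := by
          intro u hu
          rw [real_inner_smul_left]
          exact mul_nonpos_of_nonneg_of_nonpos (by positivity) (hrF u hu)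
        have hpr : ⟪p, r⟫ = 0 := by rw [real_inner_comm]; exact hrp
        have hyr : ⟪y, r⟫ = 0 := by rw [real_inner_comm]; exact hry
        have hzr : ⟪z, ‖r‖⁻¹ • r⟫ = ‖r‖ := by
          rw [real_inner_smul_right, hz, inner_add_left, real_inner_smul_left]
          have hxr' : ⟪x, r⟫ = ‖r‖ * ‖r‖ := by
            have : x = p + r := by rw [hr]; abel
            rw [this, inner_add_left, real_inner_self_eq_norm_mul_norm, hpr, zero_add]
          rw [hxr', hyr, mul_zero, add_zero]
          field_simp
        have hdz := aux_dual_le F hFne z _ hrun hruF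
        rw [hzr] at hdz
        rw [hdF0]
        calc ‖r‖ ≤ infDist z F := hdz
          _ = 1 * infDist z F := (one_mul _).symm
          _ ≤ β * infDist z F := mul_le_mul_of_nonneg_right hβ1 infDist_nonneg
end

section
/- Let C be a non-empty compact convex subset of E contained in the hyperplane H = {x ∈ E : ⟨e, x⟩ = 1}, where e ∈ E is non-zero. If C is an amenable convex set, then the cone K = {λu : λ ≥ 0, u ∈ C} generated by C is an amenable cone: for every face F ⊴ K there exists κ > 0 such that dist(x, F) ≤ κ·dist(x, K) for all x ∈ span(F). -/
open Metric Bornology RealInnerProductSpace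

/-- Auxiliary comparison lemma for `infDist`. -/
lemma infDist_le_mul_infDist {E : Type*} [NormedAddCommGroup E] {s t : Set E}
    (x y : E) {c : ℝ} (hc : 0 < c) (ht : t.Nonempty)
    (h : ∀ z ∈ t, ∃ w ∈ s, dist x w ≤ c * dist y z) :
    infDist x s ≤ c * infDist y t := by
  refine le_of_forall_pos_le_add fun ε hε => ?_
  have hlt : infDist y t < infDist y t + ε / c := lt_add_of_pos_right _ (by positivity)
  obtain ⟨z, hz, hdz⟩ := (infDist_lt_iff ht).1 hlt
  obtain ⟨w, hw, hxw⟩ := h z hz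
  have h1 : infDist x s ≤ dist x w := infDist_le_dist_of_mem hw
  have h2 : c * dist y z ≤ c * (infDist y t + ε / c) :=
    mul_le_mul_of_nonneg_left hdz.le hc.le
  have h3 : c * (infDist y t + ε / c) = c * infDist y t + ε := by
    field_simp
  linarith

set_option maxHeartbeats 1000000 in
/-- Theorem 4.5: the cone generated by a compact amenable slice, contained in a
hyperplane `{x : ⟪e, x⟫ = 1}` with `e ≠ 0`, is an amenable cone. -/
theorem amenable_cone_of_amenable_slice {E : Type*}
    [NormedAddCommGroup E] [InnerProductSpace ℝ E] [FiniteDimensional ℝ E]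
    (e : E) (he : e ≠ 0) (C : Set E) (hCne : C.Nonempty)
    (hCcp : IsCompact C) (hCcv : Convex ℝ C)
    (hCH : C ⊆ {x : E | ⟪e, x⟫ = 1})
    (hCam : AmenableSet C)
    (K : Set E) (hK : K = {y : E | ∃ l : ℝ, 0 ≤ l ∧ ∃ u ∈ C, y = l • u}) :
    ∀ F : Set E, IsFace K F → ∃ κ > (0:ℝ),
      ∀ x ∈ (Submodule.span ℝ F : Set E), infDist x F ≤ κ * infDist x K := by
  intro F hF
  obtain ⟨hFcl, hFcv, hFK, hface⟩ := hF
  obtain ⟨u₀, hu₀⟩ := hCne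
  have hK0 : (0:E) ∈ K := by
    rw [hK]; exact ⟨0, le_refl 0, u₀, hu₀, (zero_smul ℝ u₀).symm⟩
  have hCK : C ⊆ K := by
    intro u hu; rw [hK]; exact ⟨1, zero_le_one, u, hu, (one_smul ℝ u).symm⟩
  by_cases hFz : ∃ f ∈ F, f ≠ 0
  swap
  · -- trivial case: F ⊆ {0}
    push_neg at hFz
    refine ⟨1, one_pos, fun x hx => ?_⟩
    have hFsub : F ⊆ ({0} : Set E) := fun f hf => hFz f hf
    have hxz : x = 0 := by
      have hle : Submodule.span ℝ F ≤ ⊥ :=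
        Submodule.span_le.2 (fun g hg => by simpa [Submodule.mem_bot] using hFz g hg)
      exact (Submodule.mem_bot ℝ).1 (hle hx)
    subst hxz
    rcases F.eq_empty_or_nonempty with hFe | hFne
    · subst hFe
      rw [Metric.infDist_empty, one_mul]
      exact infDist_nonneg
    · obtain ⟨f, hf⟩ := hFne
      have : f = 0 := hFz f hf
      subst this
      rw [infDist_zero_of_mem hf, one_mul]
      exact infDist_nonneg
  -- main case
  obtain ⟨f, hfF, hf0⟩ := hFz
  -- K is closed under nonnegative scaling
  have hKscale : ∀ μ : ℝ, 0 ≤ μ → ∀ z ∈ K, μ • z ∈ K := by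
    intro μ hμ z hz
    rw [hK] at hz ⊢
    obtain ⟨l, hl, u, hu, rfl⟩ := hz
    exact ⟨μ * l, mul_nonneg hμ hl, u, hu, (mul_smul μ l u).symm⟩
  -- 0 ∈ F
  have h0F : (0:E) ∈ F := by
    have h2f : (2:ℝ) • f ∈ K := hKscale 2 (by norm_num) f (hFK hfF)
    have hcomb : ((1:ℝ)/2) • ((2:ℝ) • f) + (1 - (1:ℝ)/2) • (0:E) = f := by
      rw [smul_smul, smul_zero, add_zero]; norm_num
    exact (hface _ h2f 0 hK0 (1/2) (by norm_num) (by norm_num) (by rw [hcomb]; exact hfF)).2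
  -- F closed under nonnegative scaling
  have hscale : ∀ μ : ℝ, 0 ≤ μ → ∀ g ∈ F, μ • g ∈ F := by
    intro μ hμ g hg
    rcases le_or_gt μ 1 with hμ1 | hμ1
    · have := hFcv hg h0F hμ (sub_nonneg.2 hμ1) (by ring)
      simpa using this
    · have hμ0 : 0 < μ := by linarith
      have hμg : μ • g ∈ K := hKscale μ hμ g (hFK hg)
      have hcomb : ((1:ℝ)/μ) • (μ • g) + (1 - (1:ℝ)/μ) • (0:E) = g := by
        rw [smul_smul, smul_zero, add_zero]
        rw [one_div, inv_mul_cancel₀ hμ0.ne', one_smul]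
      exact (hface _ hμg 0 hK0 (1/μ) (by positivity)
        (by rw [div_lt_one hμ0]; linarith) (by rw [hcomb]; exact hg)).1
  -- F closed under addition
  have hadd : ∀ a ∈ F, ∀ b ∈ F, a + b ∈ F := by
    intro a ha b hb
    have hmid : ((1:ℝ)/2) • a + (1 - (1:ℝ)/2) • b ∈ F :=
      hFcv ha hb (by norm_num) (by norm_num : (0:ℝ) ≤ 1 - 1/2) (by ring)
    have h2 : (2:ℝ) • (((1:ℝ)/2) • a + (1 - (1:ℝ)/2) • b) = a + b := by
      rw [smul_add, smul_smul, smul_smul]; norm_num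
    have := hscale 2 (by norm_num) _ hmid
    rwa [h2] at this
  -- span F = F - F
  have hdiff : ∀ x ∈ Submodule.span ℝ F, ∃ a ∈ F, ∃ b ∈ F, x = a - b := by
    intro x hx
    induction hx using Submodule.span_induction with
    | mem x h => exact ⟨x, h, 0, h0F, (sub_zero x).symm⟩
    | zero => exact ⟨0, h0F, 0, h0F, (sub_zero 0).symm⟩
    | add x y hx hy ihx ihy =>
      obtain ⟨a, ha, b, hb, rfl⟩ := ihx
      obtain ⟨a', ha', b', hb', rfl⟩ := ihy
      exact ⟨a + a', hadd a ha a' ha', b + b', hadd b hb b' hb', by abel⟩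
    | smul r x hx ihx =>
      obtain ⟨a, ha, b, hb, rfl⟩ := ihx
      rcases le_or_gt 0 r with hr | hr
      · exact ⟨r • a, hscale r hr a ha, r • b, hscale r hr b hb, by rw [smul_sub]⟩
      · exact ⟨(-r) • b, hscale (-r) (by linarith) b hb, (-r) • a, hscale (-r) (by linarith) a ha,
          by rw [smul_sub]; module⟩
  -- the norm bound on C
  obtain ⟨u₁, hu₁C, hu₁max⟩ := hCcp.exists_isMaxOn ⟨u₀, hu₀⟩ continuous_norm.continuousOn
  set M : ℝ := ‖u₁‖ with hMdef
  have hM : 0 < M := by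
    rcases eq_or_ne u₁ 0 with h | h
    · exfalso
      have := hCH hu₁C
      rw [h] at this
      simp at this
    · exact norm_pos_iff.2 h
  -- inner products on K
  have hKnorm : ∀ z ∈ K, ‖z‖ ≤ M * ⟪e, z⟫ ∧ 0 ≤ ⟪e, z⟫ := by
    intro z hz
    rw [hK] at hz
    obtain ⟨l, hl, u, hu, rfl⟩ := hz
    have hu1 : ⟪e, u⟫ = 1 := hCH hu
    have h1 : ⟪e, l • u⟫ = l := by rw [real_inner_smul_right, hu1, mul_one]
    have h2 : ‖l • u‖ = l * ‖u‖ := by rw [norm_smul, Real.norm_eq_abs, abs_of_nonneg hl]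
    refine ⟨?_, by rw [h1]; exact hl⟩
    rw [h1, h2]
    have : ‖u‖ ≤ M := hu₁max hu
    nlinarith
  -- F ∩ C is a face of C
  have hFhatFace : IsFace C (F ∩ C) := by
    refine ⟨hFcl.inter hCcp.isClosed, hFcv.inter hCcv, Set.inter_subset_right, ?_⟩
    intro x hx y hy α hα1 hα2 hmem
    obtain ⟨h1, h2⟩ := hface x (hCK hx) y (hCK hy) α hα1 hα2 hmem.1
    exact ⟨⟨h1, hx⟩, ⟨h2, hy⟩⟩
  -- F ∩ C is nonempty
  have hFhatNe : (F ∩ C).Nonempty := by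
    have hfK := hFK hfF
    rw [hK] at hfK
    obtain ⟨l, hl, u, hu, rfl⟩ := hfK
    have hl0 : 0 < l := by
      rcases hl.lt_or_eq with h | h
      · exact h
      · exfalso; apply hf0; rw [← h, zero_smul]
    refine ⟨u, ?_, hu⟩
    have := hscale l⁻¹ (by positivity) _ hfF
    rwa [inv_smul_smul₀ hl0.ne'] at this
  -- constants
  set c₁ : ℝ := M * ‖e‖ + M + 1 with hc₁def
  have hc₁ : 0 < c₁ := by positivity
  obtain ⟨κ₀, hκ₀, himport⟩ := hCam (F ∩ C) hFhatFace (closedBall 0 c₁) isBounded_closedBall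
  set κ₁ : ℝ := 1 + ‖e‖ * M with hκ₁def
  have hκ₁ : 0 < κ₁ := by positivity
  -- the affine span inclusion
  have haff : ∀ y : E, y ∈ Submodule.span ℝ F → ⟪e, y⟫ = 1 →
      y ∈ (affineSpan ℝ (F ∩ C) : Set E) := by
    intro y hy hy1
    obtain ⟨a, ha, b, hb, rfl⟩ := hdiff y hy
    -- representation of a and b
    have haK := hFK ha
    have hbK := hFK hb
    rw [hK] at haK hbK
    obtain ⟨la, hla, ua, hua, rfl⟩ := haK
    obtain ⟨lb, hlb, ub, hub, rfl⟩ := hbK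
    have hea : ⟪e, la • ua⟫ = la := by rw [real_inner_smul_right, hCH hua, mul_one]
    have heb : ⟪e, lb • ub⟫ = lb := by rw [real_inner_smul_right, hCH hub, mul_one]
    have hlab : la - lb = 1 := by
      rw [inner_sub_right, hea, heb] at hy1; exact hy1
    rcases hlb.lt_or_eq with hlb0 | hlb0
    · -- both positive
      have hla0 : 0 < la := by linarith
      have huaF : ua ∈ F ∩ C := by
        refine ⟨?_, hua⟩
        have := hscale la⁻¹ (by positivity) _ ha
        rwa [inv_smul_smul₀ hla0.ne'] at this
      have hubF : ub ∈ F ∩ C := by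
        refine ⟨?_, hub⟩
        have := hscale lb⁻¹ (by positivity) _ hb
        rwa [inv_smul_smul₀ hlb0.ne'] at this
      have key : la • (ua -ᵥ ub) +ᵥ ub = la • ua - lb • ub := by
        simp only [vsub_eq_sub, vadd_eq_add, smul_sub]
        have : la = lb + 1 := by linarith
        rw [this]
        module
      rw [← key]
      exact (affineSpan ℝ (F ∩ C)).smul_vsub_vadd_mem la
        (subset_affineSpan ℝ _ huaF) (subset_affineSpan ℝ _ hubF) (subset_affineSpan ℝ _ hubF)
    · -- b = 0
      have hb0 : lb • ub = 0 := by rw [← hlb0, zero_smul]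
      have hla1 : la = 1 := by linarith
      have : la • ua - lb • ub = ua := by rw [hb0, hla1, one_smul, sub_zero]
      rw [this]
      refine subset_affineSpan ℝ _ ⟨?_, hua⟩
      have : la • ua = ua := by rw [hla1, one_smul]
      rwa [← this]
  -- final constant
  refine ⟨c₁ + κ₀ * κ₁, by positivity, fun x hx => ?_⟩
  set d : ℝ := infDist x K with hddef
  have hd0 : 0 ≤ d := infDist_nonneg
  rcases le_or_gt ‖x‖ (c₁ * d) with hcase | hcase
  · -- x is small compared to d
    have h1 : infDist x F ≤ dist x 0 := infDist_le_dist_of_mem h0F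
    rw [dist_zero_right] at h1
    have hκ₀κ₁ : 0 ≤ κ₀ * κ₁ * d := by positivity
    nlinarith
  · -- main case
    set t : ℝ := ⟪e, x⟫ with htdef
    -- lower bound for t
    have ht1 : ‖x‖ ≤ M * t + (1 + M * ‖e‖) * d := by
      refine le_of_forall_pos_le_add fun ε hε => ?_
      have hpos : 0 < 1 + M * ‖e‖ := by positivity
      have hlt : d < d + ε / (1 + M * ‖e‖) := lt_add_of_pos_right _ (by positivity)
      obtain ⟨z, hz, hdz⟩ := (infDist_lt_iff ⟨0, hK0⟩).1 hlt
      obtain ⟨hz1, hz2⟩ := hKnorm z hz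
      have h1 : ‖x‖ ≤ ‖z‖ + dist x z := by
        rw [dist_eq_norm]
        have := norm_sub_norm_le x z
        linarith [norm_sub_norm_le x z]
      have h2 : ⟪e, z⟫ ≤ t + ‖e‖ * dist x z := by
        have : ⟪e, z⟫ - t = ⟪e, z - x⟫ := by rw [inner_sub_right]
        have h3 : ⟪e, z - x⟫ ≤ ‖e‖ * ‖z - x‖ := real_inner_le_norm e (z - x)
        rw [dist_eq_norm, ← norm_neg (x - z)]
        simp only [neg_sub]
        linarith
      have hcancel : (1 + M * ‖e‖) * (ε / (1 + M * ‖e‖)) = ε := by field_simp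
      nlinarith [mul_le_mul_of_nonneg_left hdz.le hpos.le, hM.le, norm_nonneg e,
        mul_le_mul_of_nonneg_left h2 hM.le]
    have hx0 : 0 < ‖x‖ := lt_of_le_of_lt (by positivity) hcase
    have hxt : ‖x‖ < c₁ * t := by
      have e1 : c₁ * ‖x‖ ≤ c₁ * (M * t + (1 + M * ‖e‖) * d) :=
        mul_le_mul_of_nonneg_left ht1 hc₁.le
      have e2 : (1 + M * ‖e‖) * (c₁ * d) < (1 + M * ‖e‖) * ‖x‖ :=
        mul_lt_mul_of_pos_left hcase (by positivity)
      nlinarith [hM, norm_nonneg e]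
    have ht0 : 0 < t := by nlinarith
    -- the normalized point
    set y : E := t⁻¹ • x with hydef
    have hy_span : y ∈ Submodule.span ℝ F := Submodule.smul_mem _ _ hx
    have hyH : ⟪e, y⟫ = 1 := by
      rw [hydef, real_inner_smul_right, ← htdef, inv_mul_cancel₀ ht0.ne']
    have hy_norm : ‖y‖ ≤ c₁ := by
      rw [hydef, norm_smul, Real.norm_eq_abs, abs_of_pos (inv_pos.2 ht0)]
      rw [inv_mul_le_iff₀ ht0]
      linarith
    have hy_ball : y ∈ closedBall (0:E) c₁ := by
      rw [mem_closedBall, dist_zero_right]; exact hy_norm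
    have hy_aff := haff y hy_span hyH
    have hxy : x = t • y := by rw [hydef, smul_inv_smul₀ ht0.ne']
    -- chain of inequalities
    have h1 : infDist x F ≤ t * infDist y (F ∩ C) := by
      refine infDist_le_mul_infDist x y ht0 hFhatNe fun z hz => ?_
      refine ⟨t • z, hscale t ht0.le z hz.1, ?_⟩
      rw [hxy, dist_eq_norm, dist_eq_norm, ← smul_sub, norm_smul, Real.norm_eq_abs,
        abs_of_pos ht0]
    have h2 : infDist y (F ∩ C) ≤ κ₀ * infDist y C := himport y ⟨hy_aff, hy_ball⟩
    have h3 : infDist y C ≤ κ₁ * infDist y K := by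
      refine infDist_le_mul_infDist y y hκ₁ ⟨0, hK0⟩ fun z hz => ?_
      have hzK := hz
      rw [hK] at hz
      obtain ⟨l, hl, u, hu, rfl⟩ := hz
      refine ⟨u, hu, ?_⟩
      have hlz : ⟪e, l • u⟫ = l := by rw [real_inner_smul_right, hCH hu, mul_one]
      have hzu : dist (l • u) u = |l - 1| * ‖u‖ := by
        rw [dist_eq_norm]
        have : l • u - u = (l - 1) • u := by module
        rw [this, norm_smul, Real.norm_eq_abs]
      have hl1 : |l - 1| ≤ ‖e‖ * dist y (l • u) := by
        have : l - 1 = ⟪e, l • u - y⟫ := by rw [inner_sub_right, hlz, hyH]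
        rw [this, dist_comm, dist_eq_norm]
        calc |⟪e, l • u - y⟫| ≤ ‖e‖ * ‖l • u - y‖ := abs_real_inner_le_norm e _
          _ = ‖e‖ * ‖l • u - y‖ := rfl
      have huM : ‖u‖ ≤ M := hu₁max hu
      calc dist y u ≤ dist y (l • u) + dist (l • u) u := dist_triangle _ _ _
        _ ≤ dist y (l • u) + |l - 1| * ‖u‖ := by rw [hzu]
        _ ≤ dist y (l • u) + (‖e‖ * dist y (l • u)) * M := by
            have h0 : 0 ≤ |l - 1| := abs_nonneg _
            nlinarith [dist_nonneg (x := y) (y := l • u), norm_nonneg u, norm_nonneg e]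
        _ = κ₁ * dist y (l • u) := by rw [hκ₁def]; ring
    have h4 : infDist y K ≤ t⁻¹ * infDist x K := by
      refine infDist_le_mul_infDist y x (inv_pos.2 ht0) ⟨0, hK0⟩ fun z hz => ?_
      refine ⟨t⁻¹ • z, hKscale t⁻¹ (by positivity) z hz, ?_⟩
      rw [hydef, dist_eq_norm, dist_eq_norm, ← smul_sub, norm_smul, Real.norm_eq_abs,
        abs_of_pos (inv_pos.2 ht0)]
    have hchain : infDist x F ≤ κ₀ * κ₁ * d := by
      have c2 : κ₀ * infDist y C ≤ κ₀ * (κ₁ * infDist y K) :=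
        mul_le_mul_of_nonneg_left h3 hκ₀.le
      have c3 : κ₁ * infDist y K ≤ κ₁ * (t⁻¹ * d) := mul_le_mul_of_nonneg_left h4 hκ₁.le
      have c4 : κ₀ * (κ₁ * infDist y K) ≤ κ₀ * (κ₁ * (t⁻¹ * d)) := by
        apply mul_le_mul_of_nonneg_left c3 hκ₀.le
      have c5 : t * (κ₀ * (κ₁ * (t⁻¹ * d))) = κ₀ * κ₁ * d := by
        have e1 : t * (κ₀ * (κ₁ * (t⁻¹ * d))) = (t * t⁻¹) * (κ₀ * (κ₁ * d)) := by ring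
        rw [e1, mul_inv_cancel₀ ht0.ne', one_mul]; ring
      calc infDist x F ≤ t * infDist y (F ∩ C) := h1
        _ ≤ t * (κ₀ * infDist y C) := mul_le_mul_of_nonneg_left h2 ht0.le
        _ ≤ t * (κ₀ * (κ₁ * infDist y K)) := mul_le_mul_of_nonneg_left c2 ht0.le
        _ ≤ t * (κ₀ * (κ₁ * (t⁻¹ * d))) := mul_le_mul_of_nonneg_left c4 ht0.le
        _ = κ₀ * κ₁ * d := c5
    calc infDist x F ≤ κ₀ * κ₁ * d := hchain
      _ ≤ c₁ * d + κ₀ * κ₁ * d := le_add_of_nonneg_left (by positivity)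
      _ = (c₁ + κ₀ * κ₁) * d := by ring
end
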